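/- arXiv:2309.05640 — 6 statements merged into one kernel-verified Lean document; each statement's English description precedes it below -/
import Mathlib

section
/- Let a < b be real numbers, let f : ℝ → ℝ be continuous, and let Ω : ℝ × ℝ → ℝ be continuously differentiable with Ω(x, x) = 0 for all x and with ∂Ω/∂y (x, x) = f(x) for all x ∈ [a, b]. Then for every ε > 0 there exists δ > 0 such that for every partition a = x₀ < x₁ < ⋯ < x_N = b of [a, b] with mesh less than δ, one has |∑_{i=1}^{N} Ω(x_{i−1}, x_i) − ∫_a^b f(x) dx| ≤ ε. (This is the one-dimensional case of the paper's Main Theorem: the Riemann sums of any normalized 1-cochain antidifferentiating f dx converge to the Riemann integral of f.) -/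
/-- **One-dimensional case of the Main Theorem.**
If `f` is continuous on `[a,b]` and `Ω : ℝ × ℝ → ℝ` is a `C¹` normalized
1-cochain (`Ω (x, x) = 0`) antidifferentiating `f dx` (its van Est image
`∂Ω/∂y (x,x)` equals `f x` on `[a,b]`), then the Riemann sums of `Ω` over
partitions of `[a,b]` converge, as the mesh tends to `0`, to `∫_a^b f`. -/
theorem riemann_sums_of_normalized_one_cochain_converge
    (a b : ℝ) (hab : a < b) (f : ℝ → ℝ) (hf : Continuous f)
    (Ω : ℝ × ℝ → ℝ) (hΩ : ContDiff ℝ 1 Ω)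
    (hnorm : ∀ x : ℝ, Ω (x, x) = 0)
    (hVE : ∀ x ∈ Set.Icc a b, deriv (fun y : ℝ => Ω (x, y)) x = f x) :
    ∀ ε > 0, ∃ δ > 0, ∀ (N : ℕ) (p : ℕ → ℝ),
      0 < N → p 0 = a → p N = b →
      (∀ i < N, p i < p (i + 1)) →
      (∀ i < N, p (i + 1) - p i < δ) →
      |(∑ i ∈ Finset.range N, Ω (p i, p (i + 1))) - ∫ x in a..b, f x| ≤ ε := by
  intro ε hε
  set g : ℝ × ℝ → ℝ := fun p => fderiv ℝ Ω p (0, 1) with hgdef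
  have hΩd : Differentiable ℝ Ω := hΩ.differentiable one_ne_zero
  have hgcont : Continuous g :=
    (hΩ.continuous_fderiv one_ne_zero).clm_apply continuous_const
  have hderiv : ∀ x t : ℝ, HasDerivAt (fun y => Ω (x, y)) (g (x, t)) t := by
    intro x t
    have h1 : HasDerivAt (fun y : ℝ => ((x : ℝ), y)) ((0 : ℝ), (1 : ℝ)) t :=
      HasDerivAt.prodMk (hasDerivAt_const t x) (hasDerivAt_id t)
    exact (hΩd (x, t)).hasFDerivAt.comp_hasDerivAt t h1
  have hgf : ∀ x ∈ Set.Icc a b, g (x, x) = f x := by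
    intro x hx
    rw [← hVE x hx]
    exact ((hderiv x x).deriv).symm
  have hgint : ∀ x u v : ℝ, IntervalIntegrable (fun t => g (x, t)) MeasureTheory.volume u v := by
    intro x u v
    exact ((hgcont.comp (continuous_const.prodMk continuous_id)).intervalIntegrable u v)
  have hΩint : ∀ x y : ℝ, Ω (x, y) = ∫ t in x..y, g (x, t) := by
    intro x y
    have := intervalIntegral.integral_eq_sub_of_hasDerivAt
      (f := fun y => Ω (x, y)) (f' := fun t => g (x, t))
      (fun t _ => hderiv x t) (hgint x x y)
    rw [this]
    simp [hnorm x]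
  set H : ℝ × ℝ → ℝ := fun p => g p - f p.2 with hHdef
  have hHcont : Continuous H := hgcont.sub (hf.comp continuous_snd)
  have hK : IsCompact ((Set.Icc a b) ×ˢ (Set.Icc a b)) :=
    isCompact_Icc.prod isCompact_Icc
  have hUC : UniformContinuousOn H ((Set.Icc a b) ×ˢ (Set.Icc a b)) :=
    hK.uniformContinuousOn_of_continuous hHcont.continuousOn
  set C := ε / (2 * (b - a)) with hCdef
  have hba : (0 : ℝ) < b - a := sub_pos.mpr hab
  have hCpos : 0 < C := by positivity
  obtain ⟨δ, hδpos, hδ⟩ := Metric.uniformContinuousOn_iff.mp hUC C hCpos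
  refine ⟨δ, hδpos, ?_⟩
  intro N p hN hp0 hpN hmono hmesh
  have hmono' : ∀ j ≤ N, ∀ i ≤ j, p i ≤ p j := by
    intro j hj
    induction j with
    | zero => intro i hi; simp [Nat.le_zero.mp hi]
    | succ k ih =>
      intro i hi
      rcases Nat.lt_succ_iff_lt_or_eq.mp (Nat.lt_succ_of_le hi) with h | h
      · exact le_trans (ih (le_of_lt (Nat.lt_of_succ_le hj)) i (Nat.lt_succ_iff.mp h))
          (le_of_lt (hmono k (Nat.lt_of_succ_le hj)))
      · rw [h]
  have hmem : ∀ i ≤ N, p i ∈ Set.Icc a b := by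
    intro i hi
    constructor
    · rw [← hp0]; exact hmono' i hi 0 (Nat.zero_le i)
    · rw [← hpN]; exact hmono' N le_rfl i hi
  have hterm : ∀ i < N,
      |Ω (p i, p (i + 1)) - ∫ t in p i..p (i + 1), f t| ≤ C * (p (i + 1) - p i) := by
    intro i hi
    have hx := hmem i (le_of_lt hi)
    have hy := hmem (i + 1) hi
    have hlt := hmono i hi
    have hsub : Ω (p i, p (i + 1)) - (∫ t in p i..p (i + 1), f t)
        = ∫ t in p i..p (i + 1), (g (p i, t) - f t) := by
      rw [hΩint, intervalIntegral.integral_sub (hgint _ _ _) (hf.intervalIntegrable _ _)]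
    rw [hsub]
    have hbound : ∀ t ∈ Set.uIoc (p i) (p (i + 1)), ‖g (p i, t) - f t‖ ≤ C := by
      intro t ht
      rw [Set.uIoc_of_le (le_of_lt hlt)] at ht
      have htmem : t ∈ Set.Icc a b := ⟨le_trans hx.1 (le_of_lt ht.1), le_trans ht.2 hy.2⟩
      have h1 : ((p i, t) : ℝ × ℝ) ∈ (Set.Icc a b) ×ˢ (Set.Icc a b) := ⟨hx, htmem⟩
      have h2 : ((p i, p i) : ℝ × ℝ) ∈ (Set.Icc a b) ×ˢ (Set.Icc a b) := ⟨hx, hx⟩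
      have hdist : dist ((p i, t) : ℝ × ℝ) (p i, p i) < δ := by
        rw [Prod.dist_eq]
        simp only [dist_self]
        rw [max_eq_right dist_nonneg, Real.dist_eq, abs_of_pos (sub_pos.mpr ht.1)]
        exact lt_of_le_of_lt (by linarith [ht.2]) (hmesh i hi)
      have := hδ _ h1 _ h2 hdist
      rw [Real.dist_eq] at this
      have hH0 : H (p i, p i) = 0 := by
        simp only [hHdef]
        simp [hgf (p i) hx]
      simp only [hHdef] at this hH0
      rw [hH0, sub_zero] at this
      exact le_of_lt this
    have := intervalIntegral.norm_integral_le_of_norm_le_const hbound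
    rw [abs_of_pos (sub_pos.mpr hlt)] at this
    simpa [Real.norm_eq_abs, mul_comm] using this
  have hsplit : (∫ x in a..b, f x) = ∑ i ∈ Finset.range N, ∫ t in p i..p (i + 1), f t := by
    rw [intervalIntegral.sum_integral_adjacent_intervals
      (fun k _ => hf.intervalIntegrable _ _), hp0, hpN]
  rw [hsplit, ← Finset.sum_sub_distrib]
  calc |∑ i ∈ Finset.range N, (Ω (p i, p (i + 1)) - ∫ t in p i..p (i + 1), f t)|
      ≤ ∑ i ∈ Finset.range N, |Ω (p i, p (i + 1)) - ∫ t in p i..p (i + 1), f t| :=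
        Finset.abs_sum_le_sum_abs _ _
    _ ≤ ∑ i ∈ Finset.range N, C * (p (i + 1) - p i) :=
        Finset.sum_le_sum (fun i hi => hterm i (Finset.mem_range.mp hi))
    _ = C * (b - a) := by
        rw [← Finset.mul_sum, Finset.sum_range_sub, hp0, hpN]
    _ ≤ ε := by
        rw [hCdef]
        rw [div_mul_eq_mul_div, mul_comm (2 : ℝ), ← div_div]
        rw [mul_div_assoc, div_self (ne_of_gt hba)]
        linarith
end

section
/- Let a < b be real numbers and let Ω₀ : ℝ × ℝ → ℝ be continuously differentiable with Ω₀(x, x) = 0 for all x and ∂Ω₀/∂y (x, x) = 0 for all x ∈ [a, b]. Then for every ε > 0 there exists δ > 0 such that for every partition a = x₀ < x₁ < ⋯ < x_N = b of [a, b] with mesh less than δ, one has |∑_{i=1}^{N} Ω₀(x_{i−1}, x_i)| ≤ ε. (This is the key step in the paper's proof that the Riemann integral on [a, b] is independent of the choice of normalized antiderivative cochain: a normalized 1-cochain with vanishing van Est image has Riemann sums tending to 0.) -/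
/-- **Independence of the antiderivative cochain (key step).**
If `Ω₀ : ℝ × ℝ → ℝ` is a `C¹` normalized 1-cochain (`Ω₀ (x, x) = 0`) whose
van Est image `∂Ω₀/∂y (x,x)` vanishes on `[a,b]`, then its Riemann sums over
partitions of `[a,b]` tend to `0` as the mesh tends to `0`. -/
theorem riemann_sums_of_cochain_with_vanishing_vanEst_tend_to_zero
    (a b : ℝ) (hab : a < b)
    (Ω₀ : ℝ × ℝ → ℝ) (hΩ₀ : ContDiff ℝ 1 Ω₀)
    (hnorm : ∀ x : ℝ, Ω₀ (x, x) = 0)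
    (hVE : ∀ x ∈ Set.Icc a b, deriv (fun y : ℝ => Ω₀ (x, y)) x = 0) :
    ∀ ε > 0, ∃ δ > 0, ∀ (N : ℕ) (p : ℕ → ℝ),
      0 < N → p 0 = a → p N = b →
      (∀ i < N, p i < p (i + 1)) →
      (∀ i < N, p (i + 1) - p i < δ) →
      |∑ i ∈ Finset.range N, Ω₀ (p i, p (i + 1))| ≤ ε := by
  intro ε hε
  have hdiff : Differentiable ℝ Ω₀ := hΩ₀.differentiable one_ne_zero
  -- the partial derivative in the second variable
  set g : ℝ × ℝ → ℝ := fun q => fderiv ℝ Ω₀ q (0, 1) with hg_def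
  have hder : ∀ x y : ℝ, HasDerivAt (fun y : ℝ => Ω₀ (x, y)) (g (x, y)) y := by
    intro x y
    have h1 : HasDerivAt (fun y : ℝ => ((x, y) : ℝ × ℝ)) ((0 : ℝ), (1 : ℝ)) y :=
      (hasDerivAt_const y x).prodMk (hasDerivAt_id y)
    exact (hdiff (x, y)).hasFDerivAt.comp_hasDerivAt y h1
  have hgcont : Continuous g :=
    (hΩ₀.continuous_fderiv one_ne_zero).clm_apply continuous_const
  have hgdiag : ∀ x ∈ Set.Icc a b, g (x, x) = 0 := by
    intro x hx
    have := (hder x x).deriv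
    rw [← this]
    exact hVE x hx
  -- uniform continuity on the compact square
  set K : Set (ℝ × ℝ) := Set.Icc a b ×ˢ Set.Icc a b with hK_def
  have hKcomp : IsCompact K := isCompact_Icc.prod isCompact_Icc
  have huc : UniformContinuousOn g K :=
    hKcomp.uniformContinuousOn_of_continuous hgcont.continuousOn
  set ε' : ℝ := ε / (b - a) with hε'_def
  have hε' : 0 < ε' := div_pos hε (by linarith)
  obtain ⟨δ, hδ, hδ'⟩ := (Metric.uniformContinuousOn_iff).mp huc ε' hε'
  refine ⟨δ, hδ, ?_⟩
  intro N p hN hpa hpb hmono hmesh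
  -- monotonicity of the partition
  have hmono' : ∀ i j, i ≤ j → j ≤ N → p i ≤ p j := by
    intro i j hij hjN
    induction j with
    | zero => rw [Nat.le_zero.mp hij]
    | succ k ih =>
      rcases Nat.eq_or_lt_of_le hij with h | h
      · rw [h]
      · exact le_trans (ih (Nat.lt_succ_iff.mp h) (by omega))
          (le_of_lt (hmono k (by omega)))
  have hmem : ∀ i ≤ N, p i ∈ Set.Icc a b := by
    intro i hi
    constructor
    · rw [← hpa]; exact hmono' 0 i (Nat.zero_le i) hi
    · rw [← hpb]; exact hmono' i N hi le_rfl
  -- bound each term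
  have hterm : ∀ i < N, |Ω₀ (p i, p (i + 1))| ≤ ε' * (p (i + 1) - p i) := by
    intro i hi
    have hxi := hmem i hi.le
    have hxi1 := hmem (i + 1) hi
    have hle : p i ≤ p (i + 1) := (hmono i hi).le
    have hbound : ∀ z ∈ Set.Icc (p i) (p (i + 1)), ‖g (p i, z)‖ ≤ ε' := by
      intro z hz
      have hzab : z ∈ Set.Icc a b :=
        ⟨le_trans hxi.1 hz.1, le_trans hz.2 hxi1.2⟩
      have hd : dist ((p i, z) : ℝ × ℝ) ((p i, p i) : ℝ × ℝ) < δ := by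
        rw [Prod.dist_eq]
        simp only [dist_self, Real.dist_eq]
        have : |z - p i| < δ := by
          rw [abs_of_nonneg (by linarith [hz.1])]
          have := hmesh i hi
          linarith [hz.2]
        simpa using this.trans_le (le_refl δ) |>.trans_le le_rfl
      have := hδ' (p i, z) ⟨hxi, hzab⟩ (p i, p i) ⟨hxi, hxi⟩ hd
      rw [hgdiag (p i) hxi, dist_zero_right] at this
      exact this.le
    have hderw : ∀ z ∈ Set.Icc (p i) (p (i + 1)),
        HasDerivWithinAt (fun y : ℝ => Ω₀ (p i, y)) (g (p i, z)) (Set.Icc (p i) (p (i+1))) z :=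
      fun z _ => (hder (p i) z).hasDerivWithinAt
    have := Convex.norm_image_sub_le_of_norm_hasDerivWithin_le hderw hbound
      (convex_Icc _ _) (Set.left_mem_Icc.mpr hle) (Set.right_mem_Icc.mpr hle)
    rw [hnorm (p i), sub_zero] at this
    calc |Ω₀ (p i, p (i + 1))| ≤ ε' * ‖p (i + 1) - p i‖ := this
      _ = ε' * (p (i + 1) - p i) := by
          rw [Real.norm_eq_abs, abs_of_nonneg (by linarith)]
  calc |∑ i ∈ Finset.range N, Ω₀ (p i, p (i + 1))|
      ≤ ∑ i ∈ Finset.range N, |Ω₀ (p i, p (i + 1))| := Finset.abs_sum_le_sum_abs _ _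
    _ ≤ ∑ i ∈ Finset.range N, ε' * (p (i + 1) - p i) :=
        Finset.sum_le_sum fun i hi => hterm i (Finset.mem_range.mp hi)
    _ = ε' * (b - a) := by
        rw [← Finset.mul_sum, Finset.sum_range_sub, hpa, hpb]
    _ = ε := div_mul_cancel₀ ε (by linarith)
end

section
/- Let m, n ≥ 1 and let Ω : (ℝ^m)^{n+1} → ℝ be smooth and normalized. Define Alt_n Ω = (1/n!) ∑_{τ ∈ S_n} sgn(τ) Ω(x₀, y_{τ(1)}, …, y_{τ(n)}) (antisymmetrization over the last n slots) and Alt Ω = (1/(n+1)!) ∑_{σ ∈ S_{n+1}} sgn(σ) (Ω ∘ σ) where σ ∈ S_{n+1} acts on (ℝ^m)^{n+1} by permuting all n+1 slots. Then for every x ∈ ℝ^m and all vectors v₁, …, v_n ∈ ℝ^m, D^{(1)}_{v₁} ⋯ D^{(n)}_{v_n} (Alt_n Ω)(x, …, x) = D^{(1)}_{v₁} ⋯ D^{(n)}_{v_n} (Alt Ω)(x, …, x), where D^{(j)}_{v_j} denotes the directional derivative in the variable y_j (the (j+1)-st slot) in the direction v_j, evaluated at the diagonal point (x, …, x). (This is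 the paper's proposition VE(Ω) = VE(Alt Ω) for normalized cochains, stated for the pair groupoid of ℝ^m, where for the pair groupoid the S_{n+1}-action on the nerve is the plain permutation action on (ℝ^m)^{n+1}.) -/
open Equiv

namespace VanEstAux

variable {m n : ℕ}

/-- Slot-precomposition as a continuous linear map. -/
noncomputable def reslot (m : ℕ) {N : ℕ} (r : Fin N → Fin N) :
    (Fin N → (Fin m → ℝ)) →L[ℝ] (Fin N → (Fin m → ℝ)) :=
  ContinuousLinearMap.pi fun k => ContinuousLinearMap.proj (r k)

@[simp] lemma reslot_apply {N : ℕ} (r : Fin N → Fin N) (z : Fin N → Fin m → ℝ) (k : Fin N) :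
    reslot m r z k = z (r k) := rfl

lemma reslot_single_perm {N : ℕ} (σ : Equiv.Perm (Fin N)) (a : Fin N) (u : Fin m → ℝ) :
    reslot m (⇑σ) (Pi.single a u) = Pi.single (σ⁻¹ a) u := by
  funext k
  simp only [reslot_apply]
  rcases eq_or_ne k (σ⁻¹ a) with h | h
  · subst h
    rw [Equiv.Perm.inv_def, Equiv.apply_symm_apply, Pi.single_eq_same, Pi.single_eq_same]
  · have h2 : σ k ≠ a := fun e => h (by rw [← e, Equiv.Perm.inv_def, Equiv.symm_apply_apply])
    rw [Pi.single_eq_of_ne h, Pi.single_eq_of_ne h2]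

lemma reslot_single_of_ne (j a : Fin (n + 1)) (ha0 : a ≠ 0) (haj : a ≠ j) (u : Fin m → ℝ) :
    reslot m (fun k => if k = j then 0 else k) (Pi.single a u) = Pi.single a u := by
  funext k
  simp only [reslot_apply]
  rcases eq_or_ne k j with h | h
  · subst h
    rw [if_pos rfl, Pi.single_eq_of_ne (Ne.symm ha0), Pi.single_eq_of_ne (Ne.symm haj)]
  · rw [if_neg h]

lemma reslot_single_zero (j : Fin (n + 1)) (hj : j ≠ 0) (u : Fin m → ℝ) :
    reslot m (fun k => if k = j then 0 else k) (Pi.single 0 u)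
      = Pi.single 0 u + Pi.single j u := by
  funext k
  simp only [reslot_apply, Pi.add_apply]
  rcases eq_or_ne k j with h | h
  · subst h
    rw [if_pos rfl, Pi.single_eq_same, Pi.single_eq_of_ne hj, Pi.single_eq_same, zero_add]
  · rw [if_neg h, Pi.single_eq_of_ne h, add_zero]


lemma iter_reslot (Ω : (Fin (n + 1) → (Fin m → ℝ)) → ℝ) (hΩ : ContDiff ℝ (⊤ : ℕ∞) Ω)
    (r : Fin (n + 1) → Fin (n + 1)) (x : Fin m → ℝ)
    (w : Fin n → (Fin (n + 1) → Fin m → ℝ)) :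
    iteratedFDeriv ℝ n (fun z => Ω (reslot m r z)) (fun _ => x) w
      = iteratedFDeriv ℝ n Ω (fun _ => x) (fun i => reslot m r (w i)) := by
  have h1 := (reslot m r).iteratedFDeriv_comp_right hΩ (fun _ => x) (i := n) (by exact_mod_cast le_top)
  have hbase : reslot m r (fun _ => x) = (fun _ => x) := rfl
  rw [hbase] at h1
  have h2 : iteratedFDeriv ℝ n (fun z => Ω (reslot m r z)) (fun _ => x) w
      = iteratedFDeriv ℝ n (Ω ∘ reslot m r) (fun _ => x) w := rfl
  rw [h2, h1]
  exact ContinuousMultilinearMap.compContinuousLinearMap_apply _ _ _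

lemma deriv_vanish (Ω : (Fin (n + 1) → (Fin m → ℝ)) → ℝ) (hΩ : ContDiff ℝ (⊤ : ℕ∞) Ω)
    (hnorm : ∀ v : Fin (n + 1) → (Fin m → ℝ),
      (∃ j : Fin n, v j.succ = v 0) → Ω v = 0)
    (x : Fin m → ℝ) (j : Fin (n + 1)) (hj : j ≠ 0)
    (a : Fin n → (Fin (n + 1) → Fin m → ℝ)) :
    iteratedFDeriv ℝ n Ω (fun _ => x)
      (fun i => reslot m (fun k => if k = j then 0 else k) (a i)) = 0 := by
  set r : Fin (n + 1) → Fin (n + 1) := fun k => if k = j then 0 else k with hr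
  have hcomp : (Ω ∘ reslot m r) = fun _ => (0 : ℝ) := by
    funext z
    refine hnorm _ ?_
    obtain ⟨i, hi⟩ := Fin.exists_succ_eq_of_ne_zero hj
    refine ⟨i, ?_⟩
    have h0 : r (0 : Fin (n + 1)) = 0 := by simp [hr]
    have hsj : r i.succ = 0 := by simp [hr, hi]
    simp only [reslot_apply, h0, hsj]
  have h1 := (reslot m r).iteratedFDeriv_comp_right hΩ (fun _ => x) (i := n) (by exact_mod_cast le_top)
  have hbase : reslot m r (fun _ => x) = (fun _ : Fin (n + 1) => x) := rfl
  rw [hbase, hcomp] at h1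
  have h2 : iteratedFDeriv ℝ n (fun _ : Fin (n + 1) → Fin m → ℝ => (0 : ℝ))
      (fun _ => x) = 0 := by
    rw [iteratedFDeriv_zero_fun]; rfl
  have h3 := congrArg (fun (T : ContinuousMultilinearMap ℝ
      (fun _ : Fin n => Fin (n + 1) → Fin m → ℝ) ℝ) => T a) (h1.symm.trans h2)
  simpa [ContinuousMultilinearMap.compContinuousLinearMap_apply] using h3

lemma iter_smul_sum {ι : Type*} [Fintype ι] (c : ℝ) (s : ι → ℝ)
    (g : ι → (Fin (n + 1) → Fin m → ℝ) → ℝ) (hg : ∀ i, ContDiff ℝ (⊤ : ℕ∞) (g i))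
    (d : Fin (n + 1) → Fin m → ℝ) (w : Fin n → (Fin (n + 1) → Fin m → ℝ)) :
    iteratedFDeriv ℝ n (fun z => c * ∑ i, s i * g i z) d w
      = c * ∑ i, s i * iteratedFDeriv ℝ n (g i) d w := by
  have hgn : ∀ i : ι, ContDiff ℝ (n : ℕ∞) (g i) := fun i => (hg i).of_le (by exact_mod_cast le_top)
  have hsum : ContDiff ℝ (n : ℕ∞) fun z => ∑ i, s i * g i z :=
    ContDiff.sum fun i _ => contDiff_const.mul (hgn i)
  have h1 : iteratedFDeriv ℝ n (fun z => c * ∑ i, s i * g i z) d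
      = c • iteratedFDeriv ℝ n (fun z => ∑ i, s i * g i z) d :=
    iteratedFDeriv_const_smul_apply' (a := c) (by exact_mod_cast hsum.contDiffAt)
  have h2 := congrFun (iteratedFDeriv_sum (𝕜 := ℝ) (i := n) (u := Finset.univ)
      (f := fun i z => s i * g i z)
      (fun i _ => contDiff_const.mul (hgn i))) d
  have h3 : ∀ i : ι, iteratedFDeriv ℝ n (fun z => s i * g i z) d
      = s i • iteratedFDeriv ℝ n (g i) d := fun i =>
    iteratedFDeriv_const_smul_apply' (a := s i) (by exact_mod_cast (hgn i).contDiffAt)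
  rw [h1]
  have h4 : iteratedFDeriv ℝ n (fun z => ∑ i, s i * g i z) d
      = ∑ i, iteratedFDeriv ℝ n (fun z => s i * g i z) d := by
    rw [h2]; simp
  rw [h4]
  simp only [h3]
  simp [Finset.mul_sum]


lemma reslot_cons_single (τ : Equiv.Perm (Fin n)) (i : Fin n) (u : Fin m → ℝ) :
    reslot m (Fin.cons 0 fun j => (τ j).succ) (Pi.single i.succ u)
      = Pi.single ((τ⁻¹ i).succ) u := by
  funext k
  simp only [reslot_apply]
  refine Fin.cases ?_ ?_ k
  · rw [Fin.cons_zero, Pi.single_eq_of_ne (Ne.symm (Fin.succ_ne_zero i)),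
      Pi.single_eq_of_ne (Ne.symm (Fin.succ_ne_zero _))]
  · intro l
    rw [Fin.cons_succ]
    rcases eq_or_ne l (τ⁻¹ i) with h | h
    · subst h
      rw [Equiv.Perm.inv_def, Equiv.apply_symm_apply, Pi.single_eq_same, Pi.single_eq_same]
    · have h1 : (τ l).succ ≠ i.succ := fun e => h (by
        have h2 := Fin.succ_injective _ e
        rw [← h2, Equiv.Perm.inv_def, Equiv.symm_apply_apply])
      have h2 : l.succ ≠ (τ⁻¹ i).succ := fun e => h (Fin.succ_injective _ e)
      rw [Pi.single_eq_of_ne h1, Pi.single_eq_of_ne h2]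

lemma decompose_inv_succ (p : Fin (n + 1)) (τ : Equiv.Perm (Fin n)) (i : Fin n) :
    (Equiv.Perm.decomposeFin.symm (p, τ))⁻¹ i.succ
      = if i.succ = p then 0 else (τ⁻¹ i).succ := by
  rcases eq_or_ne i.succ p with h | h
  · rw [if_pos h]
    apply (Equiv.Perm.decomposeFin.symm (p, τ)).injective
    rw [Equiv.Perm.inv_def, Equiv.apply_symm_apply, Equiv.Perm.decomposeFin_symm_apply_zero, h]
  · rw [if_neg h]
    apply (Equiv.Perm.decomposeFin.symm (p, τ)).injective
    rw [Equiv.Perm.inv_def, Equiv.apply_symm_apply, Equiv.Perm.decomposeFin_symm_apply_succ,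
      Equiv.Perm.inv_def, Equiv.apply_symm_apply]
    exact (Equiv.swap_apply_of_ne_of_ne (Fin.succ_ne_zero i) h).symm

lemma key_cancel (Ω : (Fin (n + 1) → (Fin m → ℝ)) → ℝ) (hΩ : ContDiff ℝ (⊤ : ℕ∞) Ω)
    (hnorm : ∀ v : Fin (n + 1) → (Fin m → ℝ),
      (∃ j : Fin n, v j.succ = v 0) → Ω v = 0)
    (x : Fin m → ℝ) (v : Fin n → (Fin m → ℝ))
    (p : Fin (n + 1)) (τ : Equiv.Perm (Fin n)) :
    (if p = 0 then (1 : ℝ) else -1) *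
      iteratedFDeriv ℝ n Ω (fun _ => x)
        (fun i => Pi.single (if i.succ = p then 0 else (τ⁻¹ i).succ) (v i))
    = iteratedFDeriv ℝ n Ω (fun _ => x)
        (fun i => Pi.single ((τ⁻¹ i).succ) (v i)) := by
  classical
  rcases eq_or_ne p 0 with hp | hp
  · subst hp
    simp [Fin.succ_ne_zero]
  · obtain ⟨l0, hl0⟩ := Fin.exists_succ_eq_of_ne_zero hp
    rw [if_neg hp]
    set j : Fin (n + 1) := (τ⁻¹ l0).succ with hjdef
    set T := iteratedFDeriv ℝ n Ω (fun _ : Fin (n + 1) => x) with hT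
    set A0 : Fin n → (Fin (n + 1) → Fin m → ℝ) :=
      fun i => Pi.single ((τ⁻¹ i).succ) (v i) with hA0
    have hAeq : (fun i => Pi.single (if i.succ = p then 0 else (τ⁻¹ i).succ) (v i))
        = Function.update A0 l0 (Pi.single 0 (v l0)) := by
      funext i
      rcases eq_or_ne i l0 with h | h
      · subst h
        rw [if_pos hl0, Function.update_self]
      · have hne : i.succ ≠ p := by
          rw [← hl0]; exact fun e => h (Fin.succ_injective _ e)
        rw [if_neg hne, Function.update_of_ne h, hA0]
    have hvan := deriv_vanish Ω hΩ hnorm x j (Fin.succ_ne_zero _)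
      (Function.update A0 l0 (Pi.single 0 (v l0)))
    have hre : (fun i => reslot m (fun k => if k = j then 0 else k)
          (Function.update A0 l0 (Pi.single 0 (v l0)) i))
        = Function.update A0 l0 (Pi.single 0 (v l0) + Pi.single j (v l0)) := by
      funext i
      rcases eq_or_ne i l0 with h | h
      · rw [h, Function.update_self, Function.update_self]
        exact reslot_single_zero j (Fin.succ_ne_zero _) (v l0)
      · rw [Function.update_of_ne h, Function.update_of_ne h, hA0]
        refine reslot_single_of_ne j ((τ⁻¹ i).succ) (Fin.succ_ne_zero _) ?_ (v i)
        rw [hjdef]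
        exact fun e => h (by
          have h2 := Fin.succ_injective _ e
          have h3 := τ⁻¹.injective h2
          exact h3)
    rw [hre] at hvan
    have hsplit := T.map_update_add (Function.update A0 l0 (Pi.single 0 (v l0))) l0
      (Pi.single 0 (v l0)) (Pi.single j (v l0))
    rw [Function.update_idem, Function.update_idem, Function.update_idem] at hsplit
    have hback : Function.update A0 l0 (Pi.single j (v l0)) = A0 := by
      conv_lhs => rw [hjdef, hA0]
      exact Function.update_eq_self l0 A0
    rw [hback, hvan] at hsplit
    rw [hAeq]
    linarith [hsplit]


lemma iter_main {ι : Type*} [Fintype ι] (Ω : (Fin (n + 1) → (Fin m → ℝ)) → ℝ)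
    (hΩ : ContDiff ℝ (⊤ : ℕ∞) Ω) (c : ℝ) (s : ι → ℝ) (r : ι → (Fin (n + 1) → Fin (n + 1)))
    (x : Fin m → ℝ) (w : Fin n → (Fin (n + 1) → Fin m → ℝ)) :
    iteratedFDeriv ℝ n (fun z => c * ∑ i, s i * Ω (reslot m (r i) z)) (fun _ => x) w
      = c * ∑ i, s i *
          iteratedFDeriv ℝ n Ω (fun _ => x) (fun l => reslot m (r i) (w l)) := by
  refine Eq.trans (iter_smul_sum c s (fun i z => Ω (reslot m (r i) z))
    (fun i => hΩ.comp (reslot m (r i)).contDiff) (fun _ => x) w) ?_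
  congr 1
  refine Finset.sum_congr rfl fun i _ => ?_
  congr 1
  exact iter_reslot Ω hΩ (r i) x w

end VanEstAux

/-- **`VE(Ω) = VE(Alt Ω)` for normalized cochains (pair groupoid of `ℝᵐ`).**
For a smooth normalized `n`-cochain `Ω(x₀, y₁, …, yₙ)` on `Pair(ℝᵐ)`, the mixed
directional derivatives at the diagonal defining the van Est image agree for the
partial antisymmetrization `Altₙ Ω = (1/n!) ∑_{τ ∈ Sₙ} sgn τ · Ω(x₀, y_{τ(1)}, …, y_{τ(n)})`
and the full antisymmetrization
`Alt Ω = (1/(n+1)!) ∑_{σ ∈ S_{n+1}} sgn σ · (Ω ∘ σ)`, where `σ ∈ S_{n+1}` permutes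
all `n+1` slots. -/
theorem vanEst_of_alt_eq_vanEst
    (m n : ℕ) (hm : 1 ≤ m) (hn : 1 ≤ n)
    (Ω : (Fin (n + 1) → (Fin m → ℝ)) → ℝ)
    (hΩ : ContDiff ℝ (⊤ : ℕ∞) Ω)
    (hnorm : ∀ v : Fin (n + 1) → (Fin m → ℝ),
      (∃ j : Fin n, v j.succ = v 0) → Ω v = 0)
    (x : Fin m → ℝ) (v : Fin n → (Fin m → ℝ)) :
    iteratedFDeriv ℝ n
        (fun z : Fin (n + 1) → (Fin m → ℝ) =>
          (1 / ((Nat.factorial n : ℕ) : ℝ)) * ∑ τ : Equiv.Perm (Fin n),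
            ((Equiv.Perm.sign τ : ℤ) : ℝ) *
              Ω (Fin.cons (z 0) (fun j => z ((τ j).succ))))
        (fun _ => x) (fun l => Pi.single l.succ (v l)) =
      iteratedFDeriv ℝ n
        (fun z : Fin (n + 1) → (Fin m → ℝ) =>
          (1 / ((Nat.factorial (n + 1) : ℕ) : ℝ)) * ∑ σ : Equiv.Perm (Fin (n + 1)),
            ((Equiv.Perm.sign σ : ℤ) : ℝ) * Ω (z ∘ σ))
        (fun _ => x) (fun l => Pi.single l.succ (v l)) := by
  classical
  have hL : (fun z : Fin (n + 1) → (Fin m → ℝ) =>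
        (1 / ((Nat.factorial n : ℕ) : ℝ)) * ∑ τ : Equiv.Perm (Fin n),
          ((Equiv.Perm.sign τ : ℤ) : ℝ) * Ω (Fin.cons (z 0) (fun j => z ((τ j).succ))))
      = fun z => (1 / ((Nat.factorial n : ℕ) : ℝ)) * ∑ τ : Equiv.Perm (Fin n),
          ((Equiv.Perm.sign τ : ℤ) : ℝ) *
            Ω (VanEstAux.reslot m (Fin.cons 0 fun j => (τ j).succ) z) := by
    funext z
    congr 1
    refine Finset.sum_congr rfl fun τ _ => ?_
    congr 1
    congr 1
    funext k
    refine Fin.cases ?_ (fun l => ?_) k <;> simp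
  have hR : (fun z : Fin (n + 1) → (Fin m → ℝ) =>
        (1 / ((Nat.factorial (n + 1) : ℕ) : ℝ)) * ∑ σ : Equiv.Perm (Fin (n + 1)),
          ((Equiv.Perm.sign σ : ℤ) : ℝ) * Ω (z ∘ σ))
      = fun z => (1 / ((Nat.factorial (n + 1) : ℕ) : ℝ)) * ∑ σ : Equiv.Perm (Fin (n + 1)),
          ((Equiv.Perm.sign σ : ℤ) : ℝ) * Ω (VanEstAux.reslot m (⇑σ) z) := by
    funext z
    congr 1
  rw [hL, hR]
  rw [VanEstAux.iter_main Ω hΩ (1 / ((Nat.factorial n : ℕ) : ℝ))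
      (fun τ : Equiv.Perm (Fin n) => ((Equiv.Perm.sign τ : ℤ) : ℝ))
      (fun τ : Equiv.Perm (Fin n) => Fin.cons 0 fun j => (τ j).succ) x
      (fun l => Pi.single l.succ (v l)),
    VanEstAux.iter_main Ω hΩ (1 / ((Nat.factorial (n + 1) : ℕ) : ℝ))
      (fun σ : Equiv.Perm (Fin (n + 1)) => ((Equiv.Perm.sign σ : ℤ) : ℝ))
      (fun σ : Equiv.Perm (Fin (n + 1)) => ⇑σ) x
      (fun l => Pi.single l.succ (v l))]
  have hLterm : ∀ τ : Equiv.Perm (Fin n),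
      (fun l => VanEstAux.reslot m (Fin.cons 0 fun j => (τ j).succ)
          (Pi.single l.succ (v l)))
        = fun i : Fin n => Pi.single ((τ⁻¹ i).succ) (v i) := by
    intro τ
    funext i
    exact VanEstAux.reslot_cons_single τ i (v i)
  have hRterm : ∀ σ : Equiv.Perm (Fin (n + 1)),
      (fun l => VanEstAux.reslot m (⇑σ) (Pi.single l.succ (v l)))
        = fun i : Fin n => Pi.single (σ⁻¹ i.succ) (v i) := by
    intro σ
    funext i
    exact VanEstAux.reslot_single_perm σ i.succ (v i)
  simp only [hLterm, hRterm]
  have hre := Equiv.sum_comp (Equiv.Perm.decomposeFin (n := n)).symm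
    (fun σ : Equiv.Perm (Fin (n + 1)) => ((Equiv.Perm.sign σ : ℤ) : ℝ) *
      iteratedFDeriv ℝ n Ω (fun _ => x) (fun i : Fin n => Pi.single (σ⁻¹ i.succ) (v i)))
  rw [← hre, Fintype.sum_prod_type]
  have hpt : ∀ (p : Fin (n + 1)) (τ : Equiv.Perm (Fin n)),
      ((Equiv.Perm.sign (Equiv.Perm.decomposeFin.symm (p, τ)) : ℤ) : ℝ) *
        iteratedFDeriv ℝ n Ω (fun _ => x)
          (fun i : Fin n =>
            Pi.single ((Equiv.Perm.decomposeFin.symm (p, τ))⁻¹ i.succ) (v i))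
      = ((Equiv.Perm.sign τ : ℤ) : ℝ) *
          iteratedFDeriv ℝ n Ω (fun _ => x)
            (fun i : Fin n => Pi.single ((τ⁻¹ i).succ) (v i)) := by
    intro p τ
    have h1 : (fun i : Fin n =>
          (Pi.single ((Equiv.Perm.decomposeFin.symm (p, τ))⁻¹ i.succ) (v i) :
            Fin (n + 1) → Fin m → ℝ))
        = fun i : Fin n =>
            (Pi.single (if i.succ = p then 0 else (τ⁻¹ i).succ) (v i) :
              Fin (n + 1) → Fin m → ℝ) := by
      funext i
      rw [VanEstAux.decompose_inv_succ]
    have h2 : ((((if p = 0 then 1 else -1) * Equiv.Perm.sign τ : ℤˣ) : ℤ) : ℝ)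
        = (if p = 0 then (1 : ℝ) else -1) * ((Equiv.Perm.sign τ : ℤ) : ℝ) := by
      split <;> simp
    rw [h1, Equiv.Perm.decomposeFin.symm_sign, h2,
      mul_comm (if p = 0 then (1 : ℝ) else -1) (((Equiv.Perm.sign τ : ℤ) : ℝ)),
      mul_assoc, VanEstAux.key_cancel Ω hΩ hnorm x v p τ]
  simp only [hpt]
  rw [Finset.sum_const, Finset.card_univ, Fintype.card_fin, nsmul_eq_mul]
  have hfac : ((Nat.factorial (n + 1) : ℕ) : ℝ)
      = ((n : ℝ) + 1) * ((Nat.factorial n : ℕ) : ℝ) := by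
    push_cast [Nat.factorial_succ]
    ring
  have h0 : ((Nat.factorial n : ℕ) : ℝ) ≠ 0 :=
    Nat.cast_ne_zero.mpr (Nat.factorial_ne_zero n)
  rw [hfac]
  push_cast
  field_simp
end

section
/- Let m, n ≥ 1 and let Ω : (ℝ^m)^{n+1} → ℝ, written Ω(x₀, y₁, …, y_n), be smooth and S_n-antisymmetric. For x ∈ ℝ^m and indices 1 ≤ i₁, …, i_n ≤ m, let c_{i₁⋯i_n}(x) = (∂/∂y₁^{i₁}) ⋯ (∂/∂y_n^{i_n}) Ω(x, y₁, …, y_n) evaluated at y₁ = ⋯ = y_n = x. Then the coefficient tensor is totally antisymmetric in its indices: for every permutation τ of {1, …, n}, c_{i_{τ(1)} ⋯ i_{τ(n)}}(x) = sgn(τ) · c_{i₁⋯i_n}(x). (This expresses that the van Est image VE(Ω) = n!·c is an alternating n-form on ℝ^m, i.e. a differential n-form.) -/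
open Function

section DirDeriv

variable {E F : Type*} [NormedAddCommGroup E] [NormedSpace ℝ E]
  [NormedAddCommGroup F] [NormedSpace ℝ F]

/-- Directional derivative operator. -/
noncomputable def dirD (w : E) (g : E → F) : E → F := fun y => fderiv ℝ g y w

lemma dirD_eq (w : E) (g : E → F) :
    dirD w g = (ContinuousLinearMap.apply ℝ F w) ∘ fderiv ℝ g := rfl

lemma dirD_contDiff {g : E → F} (hg : ContDiff ℝ (⊤ : ℕ∞) g) (w : E) :
    ContDiff ℝ (⊤ : ℕ∞) (dirD w g) := by
  rw [dirD_eq]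
  exact (ContinuousLinearMap.apply ℝ F w).contDiff.comp (hg.fderiv_right (by norm_cast))

lemma dirD_swap {g : E → F} (hg : ContDiff ℝ (⊤ : ℕ∞) g) (v w : E) :
    dirD v (dirD w g) = dirD w (dirD v g) := by
  funext x
  have hsymm : IsSymmSndFDerivAt ℝ g x :=
    hg.contDiffAt.isSymmSndFDerivAt (by simp only [minSmoothness_of_isRCLikeNormedField]; exact WithTop.coe_le_coe.mpr le_top)
  have hg' : ContDiff ℝ (⊤ : ℕ∞) (fderiv ℝ g) :=
    hg.fderiv_right (m := ((⊤:ℕ∞) : WithTop ℕ∞)) (by norm_cast)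
  have key : ∀ u : E, fderiv ℝ (dirD u g) x =
      (ContinuousLinearMap.apply ℝ F u).comp (fderiv ℝ (fderiv ℝ g) x) := by
    intro u
    rw [dirD_eq]
    rw [fderiv_comp x ((ContinuousLinearMap.apply ℝ F u).differentiableAt)
      ((hg'.differentiable (by norm_cast)) x)]
    simp
  show fderiv ℝ (dirD w g) x v = fderiv ℝ (dirD v g) x w
  rw [key, key]
  exact hsymm v w

end DirDeriv

section DirDs

variable {E F : Type*} [NormedAddCommGroup E] [NormedSpace ℝ E]
  [NormedAddCommGroup F] [NormedSpace ℝ F]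

/-- Iterated directional derivative along a list of directions. -/
noncomputable def dirDs : List E → (E → F) → (E → F)
  | [], g => g
  | w :: l, g => dirD w (dirDs l g)

lemma dirDs_contDiff {g : E → F} (hg : ContDiff ℝ (⊤ : ℕ∞) g) :
    ∀ l : List E, ContDiff ℝ (⊤ : ℕ∞) (dirDs l g)
  | [] => hg
  | w :: l => dirD_contDiff (dirDs_contDiff hg l) w

lemma dirDs_append_singleton (g : E → F) (w : E) :
    ∀ l : List E, dirDs (l ++ [w]) g = dirDs l (dirD w g)
  | [] => rfl
  | u :: l => by
    show dirD u (dirDs (l ++ [w]) g) = dirD u (dirDs l (dirD w g))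
    rw [dirDs_append_singleton g w l]

lemma dirDs_perm {g : E → F} (hg : ContDiff ℝ (⊤ : ℕ∞) g) {l l' : List E}
    (h : l.Perm l') : dirDs l g = dirDs l' g := by
  induction h with
  | nil => rfl
  | cons u _ ih => show dirD u _ = dirD u _; rw [ih]
  | swap u v l => exact dirD_swap (dirDs_contDiff hg l) v u
  | trans _ _ ih1 ih2 => rw [ih1, ih2]

lemma iteratedFDeriv_eq_dirDs {n : ℕ} {f : E → F} (hf : ContDiff ℝ (⊤ : ℕ∞) f)
    (x : E) (v : Fin n → E) :
    iteratedFDeriv ℝ n f x v = dirDs (List.ofFn v) f x := by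
  induction n generalizing f with
  | zero => simp [dirDs]
  | succ n ih =>
    have hf' : ContDiff ℝ (⊤ : ℕ∞) (fderiv ℝ f) :=
      hf.fderiv_right (m := ((⊤:ℕ∞) : WithTop ℕ∞)) (by norm_cast)
    rw [iteratedFDeriv_succ_apply_right]
    have h1 : iteratedFDeriv ℝ n (fderiv ℝ f) x (Fin.init v) (v (Fin.last n)) =
        iteratedFDeriv ℝ n (dirD (v (Fin.last n)) f) x (Fin.init v) := by
      rw [dirD_eq,
        (ContinuousLinearMap.apply ℝ F (v (Fin.last n))).iteratedFDeriv_comp_left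
          hf'.contDiffAt (x := x) (by exact_mod_cast le_top)]
      rfl
    rw [h1, ih (dirD_contDiff hf _), ← dirDs_append_singleton,
      ← List.concat_eq_append]
    have : Fin.init v = fun i => v i.castSucc := rfl
    rw [this, ← List.ofFn_succ']

lemma iteratedFDeriv_comp_perm' {n : ℕ} {f : E → F} (hf : ContDiff ℝ (⊤ : ℕ∞) f)
    (x : E) (v : Fin n → E) (σ : Equiv.Perm (Fin n)) :
    iteratedFDeriv ℝ n f x (fun i => v (σ i)) = iteratedFDeriv ℝ n f x v := by
  rw [iteratedFDeriv_eq_dirDs hf, iteratedFDeriv_eq_dirDs hf, ← Function.comp_def v σ,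
    dirDs_perm hf (σ.ofFn_comp_perm v)]

end DirDs

/-- **The van Est image is an alternating form.**
For a smooth `Sₙ`-antisymmetric `n`-cochain `Ω(x₀, y₁, …, yₙ)` on the pair groupoid
of `ℝᵐ`, the coefficient tensor
`c_{i₁⋯iₙ}(x) = (∂/∂y₁^{i₁})⋯(∂/∂yₙ^{iₙ}) Ω` at the diagonal is totally
antisymmetric in its indices: `c_{i_{τ(1)}⋯i_{τ(n)}}(x) = sgn τ · c_{i₁⋯iₙ}(x)`
for every permutation `τ` of `{1, …, n}`.  (Hence `VE(Ω) = n!·c` is an alternating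
`n`-form on `ℝᵐ`, i.e. a differential `n`-form.) -/
theorem vanEst_coefficients_totally_antisymmetric
    (m n : ℕ) (hm : 1 ≤ m) (hn : 1 ≤ n)
    (Ω : (Fin (n + 1) → (Fin m → ℝ)) → ℝ)
    (hΩ : ContDiff ℝ (⊤ : ℕ∞) Ω)
    (hanti : ∀ (τ : Equiv.Perm (Fin n)) (v : Fin (n + 1) → (Fin m → ℝ)),
      Ω (Fin.cons (v 0) (fun j => v (τ j).succ)) =
        ((Equiv.Perm.sign τ : ℤ) : ℝ) * Ω v)
    (x : Fin m → ℝ) (ι : Fin n → Fin m) (τ : Equiv.Perm (Fin n)) :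
    iteratedFDeriv ℝ n Ω (fun _ => x)
        (fun j => Pi.single j.succ (Pi.single (ι (τ j)) 1)) =
      ((Equiv.Perm.sign τ : ℤ) : ℝ) *
        iteratedFDeriv ℝ n Ω (fun _ => x)
          (fun j => Pi.single j.succ (Pi.single (ι j) 1)) := by
  classical
  have hΩ' : ContDiff ℝ (⊤ : ℕ∞) Ω := hΩ.of_le (by simp)
  -- the permutation of `Fin (n+1)` fixing `0` and acting by `τ` on the rest
  let e : Equiv.Perm (Fin (n + 1)) :=
  { toFun := Fin.cases 0 (fun k => (τ k).succ)
    invFun := Fin.cases 0 (fun k => (τ⁻¹ k).succ)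
    left_inv := by
      intro i
      induction i using Fin.cases <;> simp
    right_inv := by
      intro i
      induction i using Fin.cases <;> simp }
  -- pre-composition with `e` as a continuous linear map
  let L : (Fin (n + 1) → (Fin m → ℝ)) →L[ℝ] (Fin (n + 1) → (Fin m → ℝ)) :=
    ContinuousLinearMap.pi (fun i => ContinuousLinearMap.proj (e i))
  have hL : ∀ v : Fin (n + 1) → (Fin m → ℝ), L v = v ∘ e := fun v => rfl
  have hΩL : (Ω ∘ L) = ((Equiv.Perm.sign τ : ℤ) : ℝ) • Ω := by
    funext v
    have hv : v ∘ e = Fin.cons (v 0) (fun j => v (τ j).succ) := by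
      funext i
      induction i using Fin.cases <;> simp [e]
    show Ω (L v) = ((Equiv.Perm.sign τ : ℤ) : ℝ) * Ω v
    rw [hL, hv, hanti]
  -- directions
  set u : Fin n → (Fin (n + 1) → (Fin m → ℝ)) :=
    fun j => Pi.single j.succ (Pi.single (ι j) 1) with hu
  have hx : L (fun _ => x) = (fun _ => x) := rfl
  have hLu : ∀ j, L (u (τ j)) = Pi.single j.succ (Pi.single (ι (τ j)) 1) := by
    intro j
    rw [hL]
    funext i
    simp only [Function.comp_apply]
    induction i using Fin.cases with
    | zero =>
      have h0 : e 0 = 0 := rfl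
      rw [h0, hu]
      simp only [Pi.single_apply]
      rw [if_neg (Ne.symm (Fin.succ_ne_zero (τ j))), if_neg (Ne.symm (Fin.succ_ne_zero j))]
    | succ k =>
      have hk : e k.succ = (τ k).succ := rfl
      rw [hk, hu]
      simp [Pi.single_apply, Fin.succ_inj]
  have hcomp := L.iteratedFDeriv_comp_right hΩ' (fun _ => x) (i := n)
    (by exact_mod_cast le_top)
  have key : iteratedFDeriv ℝ n Ω (fun _ => x)
      (fun j => Pi.single j.succ (Pi.single (ι (τ j)) 1)) =
      iteratedFDeriv ℝ n (Ω ∘ L) (fun _ => x) (fun j => u (τ j)) := by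
    rw [hcomp, ContinuousMultilinearMap.compContinuousLinearMap_apply]
    simp only [hLu]
    rw [hx]
  rw [key, hΩL, iteratedFDeriv_const_smul_apply (hΩ'.of_le (by exact_mod_cast le_top)).contDiffAt,
    ContinuousMultilinearMap.smul_apply,
    iteratedFDeriv_comp_perm' hΩ' (fun _ => x) u τ, smul_eq_mul]
end

section
/- Let n ≥ 1 and let Ω₀ : (ℝⁿ)^{n+1} → ℝ, written Ω₀(x₀, y₁, …, y_n), be smooth, normalized, and S_n-antisymmetric, and suppose its van Est image vanishes on the cube: (∂/∂y₁^{1}) ⋯ (∂/∂y_n^{n}) Ω₀(x, y₁, …, y_n)|_{y₁=⋯=y_n=x} = 0 for every x ∈ [0,1]ⁿ. Then for every ε > 0 there exists δ > 0 such that for all points x₀, x₁, …, x_n ∈ [0,1]ⁿ with max_{1 ≤ i ≤ n} ‖x_i − x₀‖ < δ, one has |Ω₀(x₀, x₁, …, x_n)| ≤ ε · (max_{1 ≤ i ≤ n} ‖x_i − x₀‖)ⁿ. (This uniform estimate is the key step in the paper's proof of the general case of the Main Theorem: a normalized S_n-antisymmetric cochain with vanishing van Est image is uniformly o of the n-th power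 of the simplex diameter.) -/
open scoped ContDiff

namespace VanEstAux

variable {V : Type*} [NormedAddCommGroup V] [NormedSpace ℝ V]

/-- Directional derivative operator. -/
noncomputable def dd (v : V) (g : V → ℝ) : V → ℝ := fun x => fderiv ℝ g x v

/-- Iterated directional derivatives along a list of directions; the head of the
list is the innermost derivative. -/
noncomputable def dmixL : List V → (V → ℝ) → (V → ℝ)
  | [], g => g
  | v :: l, g => dmixL l (dd v g)

theorem dd_contDiff {g : V → ℝ} (hg : ContDiff ℝ (⊤ : ℕ∞) g) (v : V) :
    ContDiff ℝ (⊤ : ℕ∞) (dd v g) :=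
  (hg.fderiv_right (by simp)).clm_apply contDiff_const

theorem dmixL_contDiff {g : V → ℝ} (hg : ContDiff ℝ (⊤ : ℕ∞) g) (l : List V) :
    ContDiff ℝ (⊤ : ℕ∞) (dmixL l g) := by
  induction l generalizing g with
  | nil => exact hg
  | cons v l ih => exact ih (dd_contDiff hg v)

theorem dmixL_append_singleton (l : List V) (v : V) (g : V → ℝ) :
    dmixL (l ++ [v]) g = dd v (dmixL l g) := by
  induction l generalizing g with
  | nil => rfl
  | cons a l ih => simpa [dmixL] using ih (dd a g)

theorem dd_comm {g : V → ℝ} (hg : ContDiff ℝ (⊤ : ℕ∞) g) (a b : V) :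
    dd a (dd b g) = dd b (dd a g) := by
  have key : ∀ (a b : V) (x : V),
      dd a (dd b g) x = fderiv ℝ (fderiv ℝ g) x a b := by
    intro a b x
    have hdiff : Differentiable ℝ (fderiv ℝ g) :=
      (hg.fderiv_right (m := 1) (WithTop.coe_le_coe.mpr le_top)).differentiable one_ne_zero
    have h1 : HasFDerivAt (fderiv ℝ g) (fderiv ℝ (fderiv ℝ g) x) x :=
      (hdiff x).hasFDerivAt
    have h2 : HasFDerivAt (fun y => fderiv ℝ g y b)
        ((ContinuousLinearMap.apply ℝ ℝ b).comp (fderiv ℝ (fderiv ℝ g) x)) x :=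
      (ContinuousLinearMap.apply ℝ ℝ b).hasFDerivAt.comp x h1
    show fderiv ℝ (fun y => fderiv ℝ g y b) x a = _
    rw [h2.fderiv]
    rfl
  funext x
  rw [key a b x, key b a x]
  exact ((hg.contDiffAt.isSymmSndFDerivAt (by norm_num; exact WithTop.coe_le_coe.mpr le_top)).eq b a).symm

theorem dmixL_perm {l l' : List V} (h : l.Perm l') :
    ∀ g : V → ℝ, ContDiff ℝ (⊤ : ℕ∞) g → dmixL l g = dmixL l' g := by
  induction h with
  | nil => intro g _; rfl
  | cons a _ ih => intro g hg; exact ih _ (dd_contDiff hg a)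
  | swap a b l =>
      intro g hg
      show dmixL l (dd a (dd b g)) = dmixL l (dd b (dd a g))
      rw [dd_comm hg a b]
  | trans h1 h2 ih1 ih2 => intro g hg; rw [ih1 g hg, ih2 g hg]


theorem iteratedFDeriv_succ_dd {g : V → ℝ} (hg : ContDiff ℝ (⊤ : ℕ∞) g) {k : ℕ}
    (m : Fin (k + 1) → V) (x : V) :
    iteratedFDeriv ℝ (k + 1) g x m =
      iteratedFDeriv ℝ k (dd (m (Fin.last k)) g) x (Fin.init m) := by
  rw [iteratedFDeriv_succ_apply_right]
  have : dd (m (Fin.last k)) g =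
      (ContinuousLinearMap.apply ℝ ℝ (m (Fin.last k))) ∘ (fderiv ℝ g) := rfl
  rw [this, ContinuousLinearMap.iteratedFDeriv_comp_left _
    (hg.fderiv_right (m := (⊤ : ℕ∞)) ((by simp))).contDiffAt ((by exact_mod_cast le_top))]
  rfl


theorem dmixL_ofFn {k : ℕ} (m : Fin k → V) (g : V → ℝ) (hg : ContDiff ℝ (⊤ : ℕ∞) g) (x : V) :
    dmixL (List.ofFn m) g x = iteratedFDeriv ℝ k g x (m ∘ Fin.rev) := by
  induction k generalizing g with
  | zero => simp [dmixL, List.ofFn_zero, iteratedFDeriv_zero_apply]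
  | succ k ih =>
      rw [List.ofFn_succ]
      show dmixL (List.ofFn (Fin.tail m)) (dd (m 0) g) x = _
      rw [ih (Fin.tail m) _ (dd_contDiff hg (m 0))]
      rw [iteratedFDeriv_succ_dd hg (m ∘ Fin.rev) x]
      congr 1
      · congr 1
        simp [Function.comp, Fin.rev_last]
      · funext j
        simp [Fin.init, Function.comp, Fin.rev_castSucc, Fin.tail]

theorem list_ofFn_perm {α : Type*} {k : ℕ} (f : Fin k → α) (e : Equiv.Perm (Fin k)) :
    (List.ofFn (f ∘ e)).Perm (List.ofFn f) := by
  rw [List.ofFn_eq_map, List.ofFn_eq_map]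
  have h1 : (List.finRange k).map (f ∘ e) = ((List.finRange k).map e).map f := by
    simp [List.map_map]
  rw [h1]
  refine List.Perm.map f ?_
  refine (List.perm_ext_iff_of_nodup ((List.nodup_finRange k).map e.injective)
    (List.nodup_finRange k)).mpr ?_
  intro a
  simp only [List.mem_map, List.mem_finRange, true_iff, iff_true]
  exact ⟨e.symm a, by simp⟩

theorem iteratedFDeriv_comp_perm {g : V → ℝ} (hg : ContDiff ℝ (⊤ : ℕ∞) g) {k : ℕ}
    (m : Fin k → V) (π : Equiv.Perm (Fin k)) (x : V) :
    iteratedFDeriv ℝ k g x (m ∘ π) = iteratedFDeriv ℝ k g x m := by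
  have h1 := dmixL_ofFn (m ∘ π ∘ Fin.rev) g hg x
  have h2 := dmixL_ofFn (m ∘ Fin.rev) g hg x
  have he : (m ∘ π ∘ Fin.rev) =
      (m ∘ Fin.rev) ∘ (Fin.revPerm.trans (π.trans Fin.revPerm) : Equiv.Perm (Fin k)) := by
    funext a; simp [Function.comp]
  have hp : (List.ofFn (m ∘ π ∘ Fin.rev)).Perm (List.ofFn (m ∘ Fin.rev)) := by
    rw [he]; exact list_ofFn_perm _ _
  have h3 : (m ∘ π ∘ Fin.rev) ∘ Fin.rev = m ∘ π := by
    funext a; simp [Function.comp]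
  have h4 : (m ∘ Fin.rev) ∘ Fin.rev = m := by
    funext a; simp [Function.comp]
  rw [← h3, ← h1, dmixL_perm hp g hg, h2, h4]

/-- The `k`-th coordinate vector of `ℝ^N`, with junk value `0` for `k ≥ N`. -/
def eb (N k : ℕ) : Fin N → ℝ := fun i => if (i : ℕ) = k then 1 else 0

theorem update_eq_line {N : ℕ} (t : Fin N → ℝ) (kF : Fin N) :
    (fun s : ℝ => Function.update t kF s) =
      fun s : ℝ => Function.update t kF 0 + s • eb N kF.val := by
  funext s
  funext i
  by_cases hi : i = kF <;>
    simp [Function.update_apply, hi, eb, Fin.val_eq_val]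

theorem hasDerivAt_update {N : ℕ} (t : Fin N → ℝ) (kF : Fin N) (s : ℝ) :
    HasDerivAt (fun s : ℝ => Function.update t kF s) (eb N kF.val) s := by
  rw [update_eq_line]
  have h : HasDerivAt (fun s : ℝ => s • eb N kF.val) ((1:ℝ) • eb N kF.val) s :=
    (hasDerivAt_id s).smul_const _
  rw [one_smul] at h
  exact h.const_add _

theorem hasDerivAt_comp_update {N : ℕ} {G : (Fin N → ℝ) → ℝ}
    (hG : Differentiable ℝ G) (t : Fin N → ℝ) (kF : Fin N) (s : ℝ) :
    HasDerivAt (fun s : ℝ => G (Function.update t kF s))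
      (fderiv ℝ G (Function.update t kF s) (eb N kF.val)) s :=
  ((hG _).hasFDerivAt).comp_hasDerivAt s (hasDerivAt_update t kF s)

theorem lemA {N : ℕ} (f : (Fin N → ℝ) → ℝ) (hf : ContDiff ℝ (⊤ : ℕ∞) f)
    (hvan : ∀ t, (∃ j : Fin N, t j = 0) → f t = 0)
    {C : ℝ} (hC0 : 0 ≤ C)
    (hbd : ∀ t ∈ Set.Icc (0 : Fin N → ℝ) 1,
      |dmixL (List.ofFn (fun j : Fin N => eb N j.val)) f t| ≤ C) :
    |f 1| ≤ C := by
  set G : ℕ → (Fin N → ℝ) → ℝ :=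
    fun k => dmixL (List.ofFn (fun j : Fin k => eb N j.val)) f with hGdef
  have G0 : G 0 = f := by simp [hGdef, List.ofFn_zero, dmixL]
  have Gsucc : ∀ k, G (k + 1) = dd (eb N k) (G k) := by
    intro k
    have h1 : (List.ofFn (fun j : Fin (k+1) => eb N j.val)) =
        (List.ofFn (fun j : Fin k => eb N j.val)) ++ [eb N k] := by
      rw [List.ofFn_succ']
      simp [List.concat_eq_append]
    rw [hGdef]
    simp only [h1, dmixL_append_singleton]
  have Gcd : ∀ k, ContDiff ℝ (⊤ : ℕ∞) (G k) := fun k => dmixL_contDiff hf _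
  have Gvan : ∀ k, ∀ t, (∃ j : Fin N, k ≤ (j : ℕ) ∧ t j = 0) → G k t = 0 := by
    intro k
    induction k with
    | zero =>
        intro t ⟨j, _, htj⟩
        rw [G0]; exact hvan t ⟨j, htj⟩
    | succ k ih =>
        intro t ⟨j, hkj, htj⟩
        have hkN : k < N := by have := j.isLt; omega
        set kF : Fin N := ⟨k, hkN⟩ with hkF
        have hzero : (fun s : ℝ => G k (Function.update t kF s)) = fun _ => (0:ℝ) := by
          funext s
          refine ih _ ⟨j, Nat.le_of_succ_le hkj, ?_⟩
          rw [Function.update_apply, if_neg, htj]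
          intro hjk
          have : (j : ℕ) = k := by rw [hjk]
          omega
        have hd := hasDerivAt_comp_update ((Gcd k).differentiable (by simp)) t kF (t kF)
        rw [hzero] at hd
        have : fderiv ℝ (G k) (Function.update t kF (t kF)) (eb N kF.val) = 0 :=
          hd.unique (hasDerivAt_const _ 0)
        rw [Function.update_eq_self] at this
        rw [Gsucc]
        exact this
  have R : ∀ k, k ≤ N →
      (∀ t ∈ Set.Icc (0 : Fin N → ℝ) 1, |G k t| ≤ C) → |f 1| ≤ C := by
    intro k
    induction k with
    | zero =>
        intro _ hb
        have h1 : (1 : Fin N → ℝ) ∈ Set.Icc (0 : Fin N → ℝ) 1 :=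
          Set.mem_Icc.mpr ⟨zero_le_one, le_refl _⟩
        simpa [G0] using hb 1 h1
    | succ k ih =>
        intro hkN hb
        refine ih (Nat.le_of_succ_le hkN) ?_
        intro t ht
        set kF : Fin N := ⟨k, hkN⟩ with hkF
        rw [Set.mem_Icc] at ht
        have htk0 : 0 ≤ t kF := ht.1 kF
        have htk1 : t kF ≤ 1 := ht.2 kF
        have hmem : ∀ s ∈ Set.Icc (0:ℝ) 1,
            Function.update t kF s ∈ Set.Icc (0 : Fin N → ℝ) 1 := by
          intro s hs
          rw [Set.mem_Icc]
          constructor <;> intro i <;> rw [Function.update_apply] <;> split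
          · exact hs.1
          · exact ht.1 i
          · exact hs.2
          · exact ht.2 i
        have hderiv : ∀ s ∈ Set.Icc (0:ℝ) 1,
            HasDerivWithinAt (fun s : ℝ => G k (Function.update t kF s))
              (G (k+1) (Function.update t kF s)) (Set.Icc (0:ℝ) 1) s := by
          intro s _
          have := hasDerivAt_comp_update ((Gcd k).differentiable (by simp)) t kF s
          rw [Gsucc]
          exact this.hasDerivWithinAt
        have hbound : ∀ s ∈ Set.Icc (0:ℝ) 1,
            ‖G (k+1) (Function.update t kF s)‖ ≤ C := by
          intro s hs
          rw [Real.norm_eq_abs]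
          exact hb _ (hmem s hs)
        have hmvt := (convex_Icc (0:ℝ) 1).norm_image_sub_le_of_norm_hasDerivWithin_le
          hderiv hbound (Set.mem_Icc.mpr ⟨le_refl 0, zero_le_one⟩)
          (Set.mem_Icc.mpr ⟨htk0, htk1⟩)
        rw [Function.update_eq_self] at hmvt
        have hzero : G k (Function.update t kF 0) = 0 :=
          Gvan k _ ⟨kF, le_refl _, Function.update_self kF 0 t⟩
        rw [hzero, sub_zero, Real.norm_eq_abs, Real.norm_eq_abs] at hmvt
        calc |G k t| ≤ C * |t kF - 0| := hmvt
          _ ≤ C * 1 := by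
              apply mul_le_mul_of_nonneg_left _ hC0
              rw [sub_zero, abs_of_nonneg htk0]; exact htk1
          _ = C := mul_one C
  exact R N le_rfl hbd

theorem diag_vanish (n : ℕ) (Ω₀ : (Fin (n + 1) → (Fin n → ℝ)) → ℝ)
    (hΩ₀ : ContDiff ℝ (⊤ : ℕ∞) Ω₀)
    (hanti : ∀ (τ : Equiv.Perm (Fin n)) (v : Fin (n + 1) → (Fin n → ℝ)),
      Ω₀ (Fin.cons (v 0) (fun j => v (τ j).succ)) =
        ((Equiv.Perm.sign τ : ℤ) : ℝ) * Ω₀ v)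
    (hVE : ∀ x ∈ Set.Icc (0 : Fin n → ℝ) 1,
      iteratedFDeriv ℝ n Ω₀ (fun _ => x)
        (fun j => Pi.single j.succ (Pi.single j 1)) = 0)
    (x : Fin n → ℝ) (hx : x ∈ Set.Icc (0 : Fin n → ℝ) 1) (r : Fin n → Fin n) :
    iteratedFDeriv ℝ n Ω₀ (fun _ => x)
      (fun j => Pi.single j.succ (Pi.single (r j) 1)) = 0 := by
  classical
  set y : Fin (n + 1) → Fin n → ℝ := fun _ => x with hy
  set mvec : (Fin n → Fin n) → (Fin n → (Fin (n + 1) → Fin n → ℝ)) :=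
    fun r j => Pi.single j.succ (Pi.single (r j) 1) with hmvec
  -- Key identity
  have key : ∀ (τ : Equiv.Perm (Fin n)) (r : Fin n → Fin n),
      iteratedFDeriv ℝ n Ω₀ y (mvec (r ∘ τ)) =
        ((Equiv.Perm.sign τ : ℤ) : ℝ) * iteratedFDeriv ℝ n Ω₀ y (mvec r) := by
    intro τ r
    set σ : Equiv.Perm (Fin (n + 1)) := Equiv.Perm.decomposeFin.symm (0, τ) with hσ
    have hσ0 : σ 0 = 0 := Equiv.Perm.decomposeFin_symm_apply_zero 0 τ
    have hσs : ∀ j : Fin n, σ j.succ = (τ j).succ := by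
      intro j
      rw [hσ, Equiv.Perm.decomposeFin_symm_apply_succ]
      simp
    set Pσ : (Fin (n + 1) → Fin n → ℝ) →L[ℝ] (Fin (n + 1) → Fin n → ℝ) :=
      ContinuousLinearMap.pi (fun a => ContinuousLinearMap.proj (σ a)) with hPσ
    have hPσ_apply : ∀ v, Pσ v = fun a => v (σ a) := fun v => rfl
    have hcomp : Ω₀ ∘ Pσ = ((Equiv.Perm.sign τ : ℤ) : ℝ) • Ω₀ := by
      funext v
      have hv : (fun a => v (σ a)) = Fin.cons (v 0) (fun j => v (τ j).succ) := by
        funext a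
        induction a using Fin.cases with
        | zero => simp [hσ0]
        | succ j => simp [hσs j]
      show Ω₀ (fun a => v (σ a)) = _
      rw [hv, hanti τ v]
      simp
    have hfix : Pσ y = y := by
      funext a; rfl
    have hPsingle : ∀ (b : Fin n) (w : Fin n → ℝ),
        Pσ (Pi.single ((τ b).succ) w) = Pi.single (b.succ : Fin (n + 1)) w := by
      intro b w
      funext a
      have hiff : σ a = (τ b).succ ↔ a = b.succ := by
        rw [← hσs b]
        exact ⟨fun h => σ.injective h, fun h => by rw [h]⟩
      have h1 : (Pσ (Pi.single ((τ b).succ) w)) a = (Pi.single ((τ b).succ) w : Fin (n+1) → Fin n → ℝ) (σ a) := rfl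
      rw [h1, Pi.single_apply, Pi.single_apply, if_congr hiff rfl rfl]
    have hmv : mvec (r ∘ τ) = (fun i => Pσ (mvec r i)) ∘ τ := by
      funext j
      show Pi.single j.succ (Pi.single (r (τ j)) 1) = Pσ (mvec r (τ j))
      rw [hmvec]
      exact (hPsingle j (Pi.single (r (τ j)) 1)).symm
    rw [hmv, iteratedFDeriv_comp_perm hΩ₀ _ τ y]
    have hTcomp : iteratedFDeriv ℝ n (Ω₀ ∘ Pσ) y (mvec r) =
        iteratedFDeriv ℝ n Ω₀ (Pσ y) (fun i => Pσ (mvec r i)) := by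
      rw [ContinuousLinearMap.iteratedFDeriv_comp_right Pσ hΩ₀ y (by exact_mod_cast le_top)]
      rfl
    rw [hfix] at hTcomp
    rw [← hTcomp, hcomp, iteratedFDeriv_const_smul_apply (hΩ₀.of_le (by exact_mod_cast le_top)).contDiffAt]
    simp
  by_cases hr : Function.Injective r
  · have hbij : Function.Bijective r := (Finite.injective_iff_bijective).mp hr
    set ρ : Equiv.Perm (Fin n) := Equiv.ofBijective r hbij with hρ
    have hid : r = id ∘ ρ := by funext j; rfl
    have h0 : iteratedFDeriv ℝ n Ω₀ y (mvec id) = 0 := hVE x hx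
    have := key ρ id
    rw [← hid] at this
    show iteratedFDeriv ℝ n Ω₀ y (mvec r) = 0
    rw [this, h0]
    simp
  · rw [Function.not_injective_iff] at hr
    obtain ⟨j₁, j₂, hrj, hne⟩ := hr
    set τ : Equiv.Perm (Fin n) := Equiv.swap j₁ j₂ with hτ
    have hrt : r ∘ τ = r := by
      funext j
      show r (Equiv.swap j₁ j₂ j) = r j
      rcases Equiv.swap_apply_def j₁ j₂ j with _
      by_cases h1 : j = j₁
      · rw [h1, Equiv.swap_apply_left, ← hrj]
      · by_cases h2 : j = j₂
        · rw [h2, Equiv.swap_apply_right, hrj]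
        · rw [Equiv.swap_apply_of_ne_of_ne h1 h2]
    have := key τ r
    rw [hrt, hτ, Equiv.Perm.sign_swap hne] at this
    show iteratedFDeriv ℝ n Ω₀ y (mvec r) = 0
    simp at this
    linarith

end VanEstAux

open VanEstAux in
set_option maxHeartbeats 1000000 in
/-- **Uniform estimate for a cochain with vanishing van Est image (key step of the
Main Theorem in the general case).**
Let `Ω₀(x₀, y₁, …, yₙ)` be a smooth, normalized, `Sₙ`-antisymmetric `n`-cochain on
the pair groupoid of `ℝⁿ` whose van Est image vanishes on the cube `[0,1]ⁿ`
(i.e. the diagonal mixed partial `(∂/∂y₁¹)⋯(∂/∂yₙⁿ) Ω₀` vanishes there).  Then for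
every `ε > 0` there is a `δ > 0` such that for all `x₀, x₁, …, xₙ ∈ [0,1]ⁿ` with
`max_i ‖xᵢ − x₀‖ < δ`, one has `|Ω₀(x₀, x₁, …, xₙ)| ≤ ε · (max_i ‖xᵢ − x₀‖)ⁿ`:
`Ω₀` is uniformly `o` of the `n`-th power of the simplex diameter. -/
theorem cochain_with_vanishing_vanEst_uniform_estimate
    (n : ℕ) (hn : 1 ≤ n)
    (Ω₀ : (Fin (n + 1) → (Fin n → ℝ)) → ℝ)
    (hΩ₀ : ContDiff ℝ (⊤ : ℕ∞) Ω₀)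
    (hnorm : ∀ v : Fin (n + 1) → (Fin n → ℝ),
      (∃ j : Fin n, v j.succ = v 0) → Ω₀ v = 0)
    (hanti : ∀ (τ : Equiv.Perm (Fin n)) (v : Fin (n + 1) → (Fin n → ℝ)),
      Ω₀ (Fin.cons (v 0) (fun j => v (τ j).succ)) =
        ((Equiv.Perm.sign τ : ℤ) : ℝ) * Ω₀ v)
    (hVE : ∀ x ∈ Set.Icc (0 : Fin n → ℝ) 1,
      iteratedFDeriv ℝ n Ω₀ (fun _ => x)
        (fun j => Pi.single j.succ (Pi.single j 1)) = 0) :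
    ∀ ε > 0, ∃ δ > 0, ∀ v : Fin (n + 1) → (Fin n → ℝ),
      (∀ i, v i ∈ Set.Icc (0 : Fin n → ℝ) 1) →
      (Finset.univ.sup' (Finset.univ_nonempty_iff.mpr ⟨⟨0, hn⟩⟩)
          fun i : Fin n => ‖v i.succ - v 0‖) < δ →
      |Ω₀ v| ≤ ε *
        (Finset.univ.sup' (Finset.univ_nonempty_iff.mpr ⟨⟨0, hn⟩⟩)
          fun i : Fin n => ‖v i.succ - v 0‖) ^ n := by
  classical
  intro ε hε
  set mvec : (Fin n → Fin n) → (Fin n → (Fin (n+1) → Fin n → ℝ)) :=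
    fun r j => Pi.single j.succ (Pi.single (r j) 1) with hmvec
  set Sfun : (Fin (n+1) → Fin n → ℝ) → ℝ :=
    fun y => ∑ r : Fin n → Fin n, |iteratedFDeriv ℝ n Ω₀ y (mvec r)| with hSfun
  have hTcont : Continuous (iteratedFDeriv ℝ n Ω₀) :=
    hΩ₀.continuous_iteratedFDeriv (by exact_mod_cast le_top)
  have hScont : Continuous Sfun := by
    refine continuous_finset_sum _ (fun r _ => ?_)
    exact (((ContinuousMultilinearMap.apply ℝ (fun _ : Fin n => (Fin (n+1) → Fin n → ℝ)) ℝ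
      (mvec r)).continuous.comp hTcont)).abs
  have hKc : IsCompact (Set.Icc (0 : Fin (n+1) → Fin n → ℝ) 1) := isCompact_Icc
  have huc := hKc.uniformContinuousOn_of_continuous hScont.continuousOn
  rw [Metric.uniformContinuousOn_iff] at huc
  obtain ⟨δ, hδ, hδp⟩ := huc ε hε
  refine ⟨δ, hδ, ?_⟩
  intro v hv hlt
  set H := (Finset.univ.sup' (Finset.univ_nonempty_iff.mpr ⟨⟨0, hn⟩⟩)
      fun i : Fin n => ‖v i.succ - v 0‖) with hH
  have hHle : ∀ j : Fin n, ‖v j.succ - v 0‖ ≤ H := by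
    intro j
    rw [hH]
    exact Finset.le_sup' (fun i : Fin n => ‖v i.succ - v 0‖) (Finset.mem_univ j)
  have hH0 : 0 ≤ H := le_trans (norm_nonneg _) (hHle ⟨0, hn⟩)
  set x₀ : Fin n → ℝ := v 0 with hx₀
  set hdir : Fin n → (Fin n → ℝ) := fun j => v j.succ - v 0 with hhdir
  set U : (Fin n → ℝ) →L[ℝ] (Fin (n+1) → Fin n → ℝ) := ContinuousLinearMap.pi
    (fun a : Fin (n + 1) => Fin.cases 0
      (fun j => ContinuousLinearMap.smulRight (ContinuousLinearMap.proj j) (hdir j)) a)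
    with hU
  set u : (Fin n → ℝ) → (Fin (n+1) → Fin n → ℝ) := fun t => (fun _ => x₀) + U t with hu
  have hUzero : ∀ t, U t 0 = 0 := by intro t; simp [hU]
  have hUsucc : ∀ t (j : Fin n), U t j.succ = t j • hdir j := by
    intro t j; simp [hU]
  have huzero : ∀ t, u t 0 = x₀ := by
    intro t; rw [hu]; show x₀ + U t 0 = x₀; rw [hUzero]; simp
  have husucc : ∀ t (j : Fin n), u t j.succ = x₀ + t j • hdir j := by
    intro t j; rw [hu]; show x₀ + U t j.succ = _; rw [hUsucc]
  set f : (Fin n → ℝ) → ℝ := Ω₀ ∘ u with hf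
  have hucd : ContDiff ℝ (⊤ : ℕ∞) u := contDiff_const.add U.contDiff
  have hfcd : ContDiff ℝ (⊤ : ℕ∞) f := hΩ₀.comp hucd
  have hvanf : ∀ t, (∃ j : Fin n, t j = 0) → f t = 0 := by
    rintro t ⟨j, hj⟩
    refine hnorm (u t) ⟨j, ?_⟩
    rw [husucc, huzero, hj, zero_smul, add_zero]
  have hf1 : f 1 = Ω₀ v := by
    show Ω₀ (u 1) = Ω₀ v
    congr 1
    funext a
    induction a using Fin.cases with
    | zero => rw [huzero]
    | succ j =>
        rw [husucc]
        show x₀ + (1 : ℝ) • hdir j = v j.succ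
        simp only [one_smul, hhdir, hx₀, Pi.sub_apply]
        abel
  set wv : ℕ → (Fin (n+1) → Fin n → ℝ) := fun k =>
    if h : k < n then Pi.single (Fin.succ ⟨k, h⟩) (hdir ⟨k, h⟩) else 0 with hwv
  have chain : ∀ k, k ≤ n →
      dmixL (List.ofFn (fun j : Fin k => eb n j.val)) f =
        (dmixL (List.ofFn (fun j : Fin k => wv j.val)) Ω₀) ∘ u := by
    intro k
    induction k with
    | zero =>
        intro _
        simp only [List.ofFn_zero]
        rfl
    | succ k ih =>
        intro hk1
        have hkn : k < n := hk1
        have h1 : (List.ofFn (fun j : Fin (k+1) => eb n j.val)) =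
            (List.ofFn (fun j : Fin k => eb n j.val)) ++ [eb n k] := by
          rw [List.ofFn_succ']; simp [List.concat_eq_append]
        have h2 : (List.ofFn (fun j : Fin (k+1) => wv j.val)) =
            (List.ofFn (fun j : Fin k => wv j.val)) ++ [wv k] := by
          rw [List.ofFn_succ']; simp [List.concat_eq_append]
        rw [h1, h2, dmixL_append_singleton, dmixL_append_singleton,
          ih (Nat.le_of_succ_le hk1)]
        set Gk := dmixL (List.ofFn (fun j : Fin k => wv j.val)) Ω₀ with hGk
        have hGkcd : ContDiff ℝ (⊤ : ℕ∞) Gk := dmixL_contDiff hΩ₀ _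
        funext t
        have huf : HasFDerivAt u U t := U.hasFDerivAt.const_add _
        have hcompfd : HasFDerivAt (Gk ∘ u) ((fderiv ℝ Gk (u t)).comp U) t :=
          ((hGkcd.differentiable (by simp) (u t)).hasFDerivAt).comp t huf
        show fderiv ℝ (Gk ∘ u) t (eb n k) = fderiv ℝ Gk (u t) (wv k)
        rw [hcompfd.fderiv]
        show fderiv ℝ Gk (u t) (U (eb n k)) = _
        congr 1
        funext a
        induction a using Fin.cases with
        | zero =>
            rw [hUzero (eb n k)]
            simp only [hwv]
            rw [dif_pos hkn, Pi.single_eq_of_ne (Ne.symm (Fin.succ_ne_zero _))]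
        | succ j =>
            rw [hUsucc (eb n k) j]
            simp only [hwv]
            rw [dif_pos hkn]
            by_cases hj : (j : ℕ) = k
            · have hjj : j = ⟨k, hkn⟩ := Fin.ext hj
              rw [hjj]
              simp [eb]
            · have hne : j.succ ≠ Fin.succ ⟨k, hkn⟩ := by
                intro hc
                exact hj (congrArg Fin.val (Fin.succ_injective n hc))
              rw [Pi.single_eq_of_ne hne]
              simp [eb, hj]
  have hbd : ∀ t ∈ Set.Icc (0 : Fin n → ℝ) 1,
      |dmixL (List.ofFn (fun j : Fin n => eb n j.val)) f t| ≤ ε * H ^ n := by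
    intro t ht
    rw [Set.mem_Icc] at ht
    rw [chain n le_rfl]
    show |dmixL (List.ofFn (fun j : Fin n => wv j.val)) Ω₀ (u t)| ≤ _
    have hwfin : (fun j : Fin n => wv j.val) =
        fun j : Fin n => Pi.single j.succ (hdir j) := by
      funext j
      simp only [hwv]
      rw [dif_pos j.isLt]
    rw [hwfin, dmixL_ofFn _ _ hΩ₀]
    have hperm : (fun j : Fin n => (Pi.single j.succ (hdir j) :
        Fin (n+1) → Fin n → ℝ)) ∘ Fin.rev =
        (fun j : Fin n => (Pi.single j.succ (hdir j) : Fin (n+1) → Fin n → ℝ)) ∘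
          (Fin.revPerm : Equiv.Perm (Fin n)) := rfl
    rw [hperm, iteratedFDeriv_comp_perm hΩ₀ _ _ _]
    set T := iteratedFDeriv ℝ n Ω₀ (u t) with hT
    have hsingle : ∀ j : Fin n, (Pi.single j.succ (hdir j) : Fin (n+1) → Fin n → ℝ) =
        ∑ i : Fin n, hdir j i • mvec (fun _ => i) j := by
      intro j
      have hx : hdir j = ∑ i : Fin n, hdir j i • (Pi.single i (1:ℝ) : Fin n → ℝ) := by
        funext i'
        rw [Finset.sum_apply]
        simp only [Pi.smul_apply, Pi.single_apply, smul_eq_mul, mul_ite, mul_one, mul_zero]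
        simp
      calc (Pi.single j.succ (hdir j) : Fin (n+1) → Fin n → ℝ)
          = Pi.single j.succ (∑ i : Fin n, hdir j i • (Pi.single i (1:ℝ) : Fin n → ℝ)) := by rw [← hx]
        _ = ∑ i : Fin n, Pi.single j.succ (hdir j i • (Pi.single i (1:ℝ) : Fin n → ℝ)) := by
            rw [← LinearMap.coe_single (R := ℝ) (φ := fun _ : Fin (n+1) => (Fin n → ℝ))
              (i := j.succ), map_sum]
        _ = ∑ i : Fin n, hdir j i • mvec (fun _ => i) j := by
            refine Finset.sum_congr rfl (fun i _ => ?_)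
            rw [Pi.single_smul]
    have hexp : T (fun j : Fin n => Pi.single j.succ (hdir j)) =
        ∑ r : Fin n → Fin n, (∏ j, hdir j (r j)) • T (mvec r) := by
      have h1 : (fun j : Fin n => (Pi.single j.succ (hdir j) : Fin (n+1) → Fin n → ℝ)) =
          fun j => ∑ i : Fin n, hdir j i • mvec (fun _ => i) j := by
        funext j; exact hsingle j
      rw [h1]
      have h2 := T.toMultilinearMap.map_sum (fun j i => hdir j i • mvec (fun _ => i) j)
      rw [ContinuousMultilinearMap.coe_coe] at h2
      rw [h2]
      refine Finset.sum_congr rfl (fun r _ => ?_)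
      have h3 := T.toMultilinearMap.map_smul_univ (fun j => hdir j (r j)) (mvec r)
      rw [ContinuousMultilinearMap.coe_coe] at h3
      exact h3
    rw [hexp]
    have hSut : Sfun (u t) ≤ ε := by
      have hvmem : ∀ i : Fin (n+1), 0 ≤ v i ∧ v i ≤ 1 := fun i => Set.mem_Icc.mp (hv i)
      have hmemut : u t ∈ Set.Icc (0 : Fin (n+1) → Fin n → ℝ) 1 := by
        rw [Set.mem_Icc]
        have hval : ∀ (a : Fin (n+1)) (i : Fin n),
            0 ≤ u t a i ∧ u t a i ≤ 1 := by
          intro a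
          induction a using Fin.cases with
          | zero =>
              intro i
              rw [huzero]
              exact ⟨(hvmem 0).1 i, (hvmem 0).2 i⟩
          | succ j =>
              intro i
              rw [husucc]
              simp only [Pi.add_apply, Pi.smul_apply, smul_eq_mul, hhdir, hx₀, Pi.sub_apply]
              have h1 := (hvmem 0).1 i
              have h2 := (hvmem 0).2 i
              have h3 := (hvmem j.succ).1 i
              have h4 := (hvmem j.succ).2 i
              have h5 := ht.1 j
              have h6 := ht.2 j
              simp only [Pi.zero_apply, Pi.one_apply] at h1 h2 h3 h4 h5 h6
              have hgoal : (0:ℝ) ≤ v 0 i + t j * (v j.succ i - v 0 i) ∧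
                  v 0 i + t j * (v j.succ i - v 0 i) ≤ 1 := by
                constructor <;> nlinarith
              exact hgoal
        exact ⟨fun a i => (hval a i).1, fun a i => (hval a i).2⟩
      have hmemdiag : (fun _ => x₀ : Fin (n+1) → Fin n → ℝ) ∈
          Set.Icc (0 : Fin (n+1) → Fin n → ℝ) 1 := by
        rw [Set.mem_Icc]
        exact ⟨fun _ => (hvmem 0).1, fun _ => (hvmem 0).2⟩
      have hdist : dist (u t) (fun _ => x₀ : Fin (n+1) → Fin n → ℝ) ≤ H := by
        rw [dist_pi_le_iff hH0]
        intro a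
        induction a using Fin.cases with
        | zero =>
            show dist (u t 0) x₀ ≤ H
            rw [huzero, dist_self]
            exact hH0
        | succ j =>
            show dist (u t j.succ) x₀ ≤ H
            rw [husucc, dist_eq_norm, add_sub_cancel_left, norm_smul]
            have ht1 : ‖t j‖ ≤ 1 := by
              rw [Real.norm_eq_abs, abs_of_nonneg (ht.1 j)]
              exact ht.2 j
            calc ‖t j‖ * ‖hdir j‖ ≤ 1 * H :=
              mul_le_mul ht1 (hHle j) (norm_nonneg _) zero_le_one
              _ = H := one_mul H
      have hd := hδp (u t) hmemut (fun _ => x₀) hmemdiag (lt_of_le_of_lt hdist hlt)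
      have hSdiag : Sfun (fun _ => x₀) = 0 := by
        rw [hSfun]
        refine Finset.sum_eq_zero (fun r _ => ?_)
        rw [show (iteratedFDeriv ℝ n Ω₀ (fun _ => x₀)) (mvec r) = 0 from
          diag_vanish n Ω₀ hΩ₀ hanti hVE x₀ (hv 0) r]
        exact abs_zero
      rw [hSdiag, dist_zero_right, Real.norm_eq_abs] at hd
      exact le_of_lt (lt_of_abs_lt hd)
    have hprod : ∀ r : Fin n → Fin n, |∏ j, hdir j (r j)| ≤ H ^ n := by
      intro r
      rw [Finset.abs_prod]
      calc ∏ j, |hdir j (r j)| ≤ ∏ _j : Fin n, H := by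
            refine Finset.prod_le_prod (fun _ _ => abs_nonneg _) (fun j _ => ?_)
            calc |hdir j (r j)| = ‖hdir j (r j)‖ := (Real.norm_eq_abs _).symm
              _ ≤ ‖hdir j‖ := norm_le_pi_norm (hdir j) (r j)
              _ ≤ H := hHle j
        _ = H ^ n := by rw [Finset.prod_const, Finset.card_univ, Fintype.card_fin]
    calc |∑ r : Fin n → Fin n, (∏ j, hdir j (r j)) • T (mvec r)|
        ≤ ∑ r : Fin n → Fin n, |(∏ j, hdir j (r j)) • T (mvec r)| :=
          Finset.abs_sum_le_sum_abs _ _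
      _ ≤ ∑ r : Fin n → Fin n, H ^ n * |T (mvec r)| := by
          refine Finset.sum_le_sum (fun r _ => ?_)
          rw [smul_eq_mul, abs_mul]
          exact mul_le_mul_of_nonneg_right (hprod r) (abs_nonneg _)
      _ = H ^ n * Sfun (u t) := by rw [← Finset.mul_sum]
      _ ≤ H ^ n * ε := mul_le_mul_of_nonneg_left hSut (pow_nonneg hH0 n)
      _ = ε * H ^ n := mul_comm _ _
  rw [← hf1]
  have Ht1 := lemA (N := n) f hfcd
  have Ht2 := Ht1 hvanf (C := ε * H ^ n) (mul_nonneg (le_of_lt hε) (pow_nonneg hH0 n))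
  exact Ht2 hbd
end

section
/- Let n ≥ 1 and let f : ℝⁿ → ℝ be continuous. Then for every ε > 0 there exists δ > 0 with the following property: for every finite family of n-simplices Δ₁, …, Δ_K ⊆ ℝⁿ, where Δ_k is the convex hull of affinely independent points v₀ᵏ, v₁ᵏ, …, v_nᵏ ordered positively (det[v₁ᵏ − v₀ᵏ, …, v_nᵏ − v₀ᵏ] > 0), such that the simplices have pairwise disjoint interiors, their union is [0,1]ⁿ, and each has diameter less than δ, one has | ∑_{k=1}^{K} f(v₀ᵏ) · det[v₁ᵏ − v₀ᵏ, …, v_nᵏ − v₀ᵏ] / n! − ∫_{[0,1]ⁿ} f dvol | ≤ ε. (This is the paper's Main Theorem for the cube [0,1]ⁿ with the standard normalized S_n-antisymmetric antiderivative cochain Ω(x₀, y₁, …, y_n) = f(x₀) · Vol_Δ(x₀, y₁, …, y_n): the Riemann sums of Ω over oriented triangulations converge to the integral of f dx¹∧⋯∧dxⁿ.) -/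
open scoped BigOperators
open MeasureTheory Finset
open scoped ENNReal

namespace RST

/-- The corner simplex `{x | 0 ≤ x, ∑ x ≤ 1}`. -/
def corner (n : ℕ) : Set (Fin n → ℝ) := {x | (∀ i, 0 ≤ x i) ∧ ∑ i, x i ≤ 1}

lemma convex_corner (n : ℕ) : Convex ℝ (corner n) := by
  intro x hx y hy a b ha hb hab
  refine ⟨fun i => add_nonneg (mul_nonneg ha (hx.1 i)) (mul_nonneg hb (hy.1 i)), ?_⟩
  have : ∑ i, (a • x + b • y) i = a * ∑ i, x i + b * ∑ i, y i := by
    simp [Finset.mul_sum, Finset.sum_add_distrib]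
  rw [this]
  calc a * ∑ i, x i + b * ∑ i, y i ≤ a * 1 + b * 1 := by
        gcongr; exacts [hx.2, hy.2]
    _ = 1 := by rw [mul_one, mul_one, hab]

/-- standard vertices -/
def stdVert (n : ℕ) : Fin (n + 1) → Fin n → ℝ :=
  Fin.cons 0 (fun i => Pi.single i 1)

lemma corner_eq_convexHull (n : ℕ) :
    corner n = convexHull ℝ (Set.range (stdVert n)) := by
  apply Set.Subset.antisymm
  · intro x hx
    set tw : Fin (n + 1) → ℝ := Fin.cons (1 - ∑ i, x i) x with htw
    have hsum : ∑ j, tw j = 1 := by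
      rw [Fin.sum_cons]; ring
    have hnn : ∀ j ∈ Finset.univ, 0 ≤ tw j := by
      intro j _
      refine Fin.cases ?_ ?_ j
      · simpa [htw] using sub_nonneg.2 hx.2
      · intro i; simpa [htw] using hx.1 i
    have hmem := Finset.centerMass_mem_convexHull (t := Finset.univ) (w := tw)
      (z := stdVert n) hnn (by rw [hsum]; norm_num)
      (fun j _ => Set.mem_range_self j)
    rw [Finset.centerMass_eq_of_sum_1 _ _ hsum] at hmem
    convert hmem using 1
    funext a
    rw [Fin.sum_univ_succ]
    simp [stdVert, htw, Pi.single_apply, mul_ite, Finset.sum_ite_eq']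
  · apply convexHull_min _ (convex_corner n)
    rintro _ ⟨j, rfl⟩
    refine Fin.cases ?_ ?_ j
    · exact ⟨fun i => le_refl 0, by simp [stdVert]⟩
    · intro i
      refine ⟨fun a => ?_, ?_⟩
      · simp only [stdVert, Fin.cons_succ]
        rcases eq_or_ne a i with h | h <;> simp [Pi.single_apply, h]
      · simp [stdVert, Pi.single_apply]

/-- Any simplex is the image of the corner simplex under an affine map. -/
lemma convexHull_eq_image (n : ℕ) (w : Fin (n + 1) → Fin n → ℝ) :
    convexHull ℝ (Set.range w) =
      (fun x => w 0 + (Matrix.of fun a i : Fin n => (w i.succ - w 0) a).mulVec x) '' corner n := by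
  set M : Matrix (Fin n) (Fin n) ℝ := Matrix.of fun a i : Fin n => (w i.succ - w 0) a with hM
  set T : (Fin n → ℝ) →ᵃ[ℝ] (Fin n → ℝ) :=
    { toFun := fun x => w 0 + M.mulVec x
      linear := M.mulVecLin
      map_vadd' := by
        intro p v
        simp only [vadd_eq_add, Matrix.mulVec_add, Matrix.mulVecLin_apply]
        abel } with hT
  have hTu : T ∘ stdVert n = w := by
    funext j
    refine Fin.cases ?_ ?_ j
    · show w 0 + M.mulVec 0 = w 0
      simp
    · intro i
      show w 0 + M.mulVec (Pi.single i 1) = w i.succ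
      rw [Matrix.mulVec_single_one]
      funext a
      simp [hM]
  have : Set.range w = T '' Set.range (stdVert n) := by
    rw [← Set.range_comp, hTu]
  rw [this, ← AffineMap.image_convexHull, ← corner_eq_convexHull]
  rfl

variable {n : ℕ}

/-- the order simplex attached to a permutation σ -/
def ordS (σ : Equiv.Perm (Fin n)) : Set (Fin n → ℝ) :=
  {y | Monotone (y ∘ σ)} ∩ Set.Icc 0 1

lemma isClosed_ordS (σ : Equiv.Perm (Fin n)) : IsClosed (ordS σ) := by
  refine IsClosed.inter ?_ isClosed_Icc
  have : {y : Fin n → ℝ | Monotone (y ∘ σ)} =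
      ⋂ (i : Fin n) (j : Fin n) (_ : i ≤ j), {y : Fin n → ℝ | y (σ i) ≤ y (σ j)} := by
    ext y
    simp only [Set.mem_setOf_eq, Set.mem_iInter]
    exact ⟨fun h i j hij => h hij, fun h i j hij => h i j hij⟩
  rw [this]
  refine isClosed_iInter fun i => isClosed_iInter fun j => isClosed_iInter fun _ => ?_
  exact isClosed_le (continuous_apply _) (continuous_apply _)

lemma volume_ordS (σ : Equiv.Perm (Fin n)) :
    volume (ordS σ) = volume (ordS (1 : Equiv.Perm (Fin n))) := by
  have hmp : MeasurePreserving (MeasurableEquiv.arrowCongr' (σ.symm : Fin n ≃ Fin n)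
      (MeasurableEquiv.refl ℝ)) (volume : Measure (Fin n → ℝ)) volume :=
    volume_preserving_arrowCongr' _ _ (MeasurePreserving.id _)
  have hpre : (MeasurableEquiv.arrowCongr' (σ.symm : Fin n ≃ Fin n)
      (MeasurableEquiv.refl ℝ)) ⁻¹' (ordS 1) = ordS σ := by
    ext y
    have happ : (MeasurableEquiv.arrowCongr' (σ.symm : Fin n ≃ Fin n)
        (MeasurableEquiv.refl ℝ)) y = y ∘ σ := by
      funext i; rfl
    simp only [Set.mem_preimage, happ, ordS, Set.mem_inter_iff, Set.mem_setOf_eq]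
    constructor
    · rintro ⟨h1, h2⟩
      refine ⟨by simpa using h1, ?_⟩
      rw [Set.mem_Icc] at h2 ⊢
      constructor
      · intro i
        simpa using h2.1 (σ.symm i)
      · intro i
        simpa using h2.2 (σ.symm i)
    · rintro ⟨h1, h2⟩
      refine ⟨by simpa using h1, ?_⟩
      rw [Set.mem_Icc] at h2 ⊢
      exact ⟨fun i => h2.1 (σ i), fun i => h2.2 (σ i)⟩
  rw [← hpre, hmp.measure_preimage (isClosed_ordS 1).measurableSet.nullMeasurableSet]

lemma iUnion_ordS : (⋃ σ : Equiv.Perm (Fin n), ordS σ) = Set.Icc (0 : Fin n → ℝ) 1 := by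
  apply Set.Subset.antisymm
  · exact Set.iUnion_subset fun σ => Set.inter_subset_right
  · intro y hy
    exact Set.mem_iUnion.2 ⟨Tuple.sort y, ⟨Tuple.monotone_sort y, hy⟩⟩

lemma aedisjoint_ordS : Pairwise (Function.onFun (AEDisjoint (volume : Measure (Fin n → ℝ))) ordS) := by
  intro σ τ hστ
  have hsub : ordS σ ∩ ordS τ ⊆
      ⋃ (p : Fin n × Fin n) (_ : p.1 ≠ p.2), {y : Fin n → ℝ | y p.1 = y p.2} := by
    rintro y ⟨⟨h1, _⟩, ⟨h2, _⟩⟩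
    by_contra hy
    simp only [Set.mem_iUnion, Set.mem_setOf_eq, not_exists] at hy
    have hinj : Function.Injective y := by
      intro a b hab
      by_contra hne
      exact hy (a, b) hne hab
    have := Tuple.unique_monotone h1 h2
    have hστ' : σ = τ := Equiv.ext fun i => hinj (congrFun this i)
    exact hστ hστ'
  have hz : volume (⋃ (p : Fin n × Fin n) (_ : p.1 ≠ p.2), {y : Fin n → ℝ | y p.1 = y p.2})
      = 0 := by
    refine measure_iUnion_null fun p => measure_iUnion_null fun hp => ?_
    set φ : (Fin n → ℝ) →ₗ[ℝ] ℝ :=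
      (LinearMap.proj p.1 : (Fin n → ℝ) →ₗ[ℝ] ℝ) - LinearMap.proj p.2 with hφ
    have hker : {y : Fin n → ℝ | y p.1 = y p.2} = (LinearMap.ker φ : Set (Fin n → ℝ)) := by
      ext y
      simp only [hφ, Set.mem_setOf_eq, SetLike.mem_coe, LinearMap.mem_ker, LinearMap.sub_apply,
        LinearMap.proj_apply, sub_eq_zero]
    rw [hker]
    refine Measure.addHaar_submodule _ _ ?_
    intro htop
    have h0 : φ (Pi.single p.1 1) = 0 := by
      rw [← LinearMap.mem_ker, htop]; trivial
    have h1 : φ (Pi.single p.1 1) = 1 := by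
      simp only [hφ, LinearMap.sub_apply, LinearMap.proj_apply]
      rw [Pi.single_eq_same, Pi.single_eq_of_ne (Ne.symm hp)]
      norm_num
    rw [h0] at h1
    norm_num at h1
  exact measure_mono_null hsub hz

/-- cumulative sum matrix -/
def cumul (n : ℕ) : Matrix (Fin n) (Fin n) ℝ := Matrix.of fun i j => if j ≤ i then 1 else 0

lemma det_cumul : (cumul n).det = 1 := by
  rw [Matrix.det_of_lowerTriangular (cumul n) ?h]
  · simp [cumul]
  · intro i j hij
    have : ¬ (j ≤ i) := by
      simp only [OrderDual.toDual_lt_toDual] at hij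
      exact not_le.2 hij
    simp [cumul, this]

lemma mulVec_cumul (x : Fin n → ℝ) (i : Fin n) :
    (cumul n).mulVec x i = ∑ j ∈ Finset.Iic i, x j := by
  have : (cumul n).mulVec x i = ∑ j, if j ≤ i then x j else 0 := by
    simp [cumul, Matrix.mulVec, dotProduct, ite_mul]
  rw [this, ← Finset.sum_filter]
  congr 1
  ext j
  simp

lemma image_cumul_corner (hn : 1 ≤ n) :
    (cumul n).mulVecLin '' corner n = ordS (1 : Equiv.Perm (Fin n)) := by
  have hord : ordS (1 : Equiv.Perm (Fin n)) = {y | Monotone y} ∩ Set.Icc 0 1 := by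
    simp [ordS]
  rw [hord]
  apply Set.Subset.antisymm
  · rintro _ ⟨x, hx, rfl⟩
    constructor
    · intro i i' hii'
      simp only [Matrix.mulVecLin_apply, mulVec_cumul]
      exact Finset.sum_le_sum_of_subset_of_nonneg (Finset.Iic_subset_Iic.2 hii')
        (fun j _ _ => hx.1 j)
    · rw [Set.mem_Icc]
      constructor
      · intro i
        simp only [Matrix.mulVecLin_apply, mulVec_cumul, Pi.zero_apply]
        exact Finset.sum_nonneg fun j _ => hx.1 j
      · intro i
        simp only [Matrix.mulVecLin_apply, mulVec_cumul, Pi.one_apply]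
        calc ∑ j ∈ Finset.Iic i, x j ≤ ∑ j, x j :=
              Finset.sum_le_sum_of_subset_of_nonneg (Finset.subset_univ _) fun j _ _ => hx.1 j
          _ ≤ 1 := hx.2
  · rintro y ⟨hmono, hicc⟩
    rw [Set.mem_Icc] at hicc
    set x : Fin n → ℝ := fun i =>
      y i - (if h : (i : ℕ) = 0 then 0 else y ⟨(i : ℕ) - 1, by omega⟩) with hxdef
    have key : ∀ m : ℕ, ∀ hm : m < n, ∑ j ∈ Finset.Iic (⟨m, hm⟩ : Fin n), x j = y ⟨m, hm⟩ := by
      intro m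
      induction m with
      | zero =>
        intro hm
        have : Finset.Iic (⟨0, hm⟩ : Fin n) = {⟨0, hm⟩} := by
          ext j
          simp [Fin.le_def, Fin.ext_iff, Nat.le_zero]
        rw [this, Finset.sum_singleton, hxdef]
        simp
      | succ m ih =>
        intro hm
        have hm' : m < n := by omega
        have hins : Finset.Iic (⟨m + 1, hm⟩ : Fin n) =
            insert (⟨m + 1, hm⟩ : Fin n) (Finset.Iic (⟨m, hm'⟩ : Fin n)) := by
          ext j
          simp only [Finset.mem_Iic, Finset.mem_insert, Fin.le_def, Fin.ext_iff]
          omega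
        have hnotmem : (⟨m + 1, hm⟩ : Fin n) ∉ Finset.Iic (⟨m, hm'⟩ : Fin n) := by
          simp [Finset.mem_Iic, Fin.le_def]
        rw [hins, Finset.sum_insert hnotmem, ih hm', hxdef]
        simp only
        rw [dif_neg (by omega : ¬ (m + 1 = 0))]
        have : (⟨m + 1 - 1, by omega⟩ : Fin n) = ⟨m, hm'⟩ := by simp
        rw [this]
        ring
    refine ⟨x, ⟨?_, ?_⟩, ?_⟩
    · intro i
      rw [hxdef]
      simp only
      split_ifs with h
      · simpa using hicc.1 i
      · have hle : (⟨(i : ℕ) - 1, by omega⟩ : Fin n) ≤ i := by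
          simp only [Fin.le_def]; omega
        simpa using hmono hle
    · have huniv : (Finset.univ : Finset (Fin n)) = Finset.Iic (⟨n - 1, by omega⟩ : Fin n) := by
        ext j
        simp only [Finset.mem_univ, Finset.mem_Iic, Fin.le_def, true_iff]
        omega
      rw [huniv, key (n - 1) (by omega)]
      exact hicc.2 _
    · funext i
      simp only [Matrix.mulVecLin_apply, mulVec_cumul]
      have := key i.val i.isLt
      simpa using this

lemma volume_Icc_cube : volume (Set.Icc (0 : Fin n → ℝ) 1) = 1 := by
  rw [Real.volume_Icc_pi]
  simp

lemma volume_ordS_one_eq (hn : 1 ≤ n) :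
    volume (ordS (1 : Equiv.Perm (Fin n))) = volume (corner n) := by
  rw [← image_cumul_corner hn, Measure.addHaar_image_linearMap]
  have hdet : LinearMap.det (cumul n).mulVecLin = 1 := by
    rw [show LinearMap.det (cumul n).mulVecLin = (cumul n).det from LinearMap.det_toLin' _,
      det_cumul]
  rw [hdet]
  simp

lemma volume_corner (hn : 1 ≤ n) : volume (corner n) = ((n.factorial : ℝ≥0∞))⁻¹ := by
  have hsum : volume (⋃ σ : Equiv.Perm (Fin n), ordS σ) = ∑' σ : Equiv.Perm (Fin n),
      volume (ordS σ) :=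
    measure_iUnion₀ aedisjoint_ordS
      (fun σ => (isClosed_ordS σ).measurableSet.nullMeasurableSet)
  rw [iUnion_ordS, volume_Icc_cube, tsum_fintype] at hsum
  have hterm : ∀ σ : Equiv.Perm (Fin n), volume (ordS σ) = volume (corner n) := fun σ => by
    rw [volume_ordS σ, volume_ordS_one_eq hn]
  rw [Finset.sum_congr rfl (fun σ _ => hterm σ), Finset.sum_const, Finset.card_univ,
    Fintype.card_perm, Fintype.card_fin, nsmul_eq_mul] at hsum
  have h0 : ((n.factorial : ℝ≥0∞)) ≠ 0 := Nat.cast_ne_zero.2 n.factorial_ne_zero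
  have htop : ((n.factorial : ℝ≥0∞)) ≠ ⊤ := ENNReal.natCast_ne_top _
  calc volume (corner n)
      = (n.factorial : ℝ≥0∞)⁻¹ * ((n.factorial : ℝ≥0∞) * volume (corner n)) := by
        rw [← mul_assoc, ENNReal.inv_mul_cancel h0 htop, one_mul]
    _ = (n.factorial : ℝ≥0∞)⁻¹ := by rw [← hsum, mul_one]

/-- volume of a positively-oriented simplex -/
lemma volume_simplex (hn : 1 ≤ n) (w : Fin (n + 1) → Fin n → ℝ)
    (hdet : 0 < Matrix.det (Matrix.of fun a i : Fin n => (w i.succ - w 0) a)) :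
    volume (convexHull ℝ (Set.range w)) =
      ENNReal.ofReal
        (Matrix.det (Matrix.of fun a i : Fin n => (w i.succ - w 0) a) / n.factorial) := by
  set M : Matrix (Fin n) (Fin n) ℝ := Matrix.of fun a i : Fin n => (w i.succ - w 0) a with hM
  rw [convexHull_eq_image n w]
  have himg : (fun x => w 0 + M.mulVec x) '' corner n
      = (w 0 + ·) '' (M.mulVecLin '' corner n) := by
    rw [Set.image_image]
    rfl
  rw [himg, Set.image_add_left, measure_preimage_add,
    Measure.addHaar_image_linearMap,
    show LinearMap.det M.mulVecLin = M.det from LinearMap.det_toLin' _, volume_corner hn]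
  rw [abs_of_pos hdet]
  have hfac : ((n.factorial : ℝ≥0∞))⁻¹ = ENNReal.ofReal (n.factorial : ℝ)⁻¹ := by
    rw [← ENNReal.ofReal_natCast, ← ENNReal.ofReal_inv_of_pos]
    exact_mod_cast n.factorial_pos
  rw [hfac, ← ENNReal.ofReal_mul hdet.le, div_eq_mul_inv]

end RST

/-- **Main Theorem for the cube `[0,1]ⁿ`, standard antiderivative cochain.**
Let `f : ℝⁿ → ℝ` be continuous.  For every `ε > 0` there is `δ > 0` such that for
every finite family of `n`-simplices `Δ₁, …, Δ_K ⊆ ℝⁿ` — where `Δₖ` is the convex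
hull of affinely independent vertices `v₀ᵏ, …, vₙᵏ` ordered positively
(`det[v₁ᵏ−v₀ᵏ, …, vₙᵏ−v₀ᵏ] > 0`) — with pairwise disjoint interiors, union `[0,1]ⁿ`
and diameters less than `δ`, the Riemann sum
`∑ₖ f(v₀ᵏ)·det[v₁ᵏ−v₀ᵏ, …, vₙᵏ−v₀ᵏ]/n!` is within `ε` of `∫_{[0,1]ⁿ} f`. -/
theorem riemann_sums_over_triangulations_converge_to_integral
    (n : ℕ) (hn : 1 ≤ n) (f : (Fin n → ℝ) → ℝ) (hf : Continuous f) :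
    ∀ ε > 0, ∃ δ > 0, ∀ (K : ℕ) (w : Fin K → Fin (n + 1) → (Fin n → ℝ)),
      (∀ k, AffineIndependent ℝ (w k)) →
      (∀ k, 0 < Matrix.det (Matrix.of fun a i : Fin n => (w k i.succ - w k 0) a)) →
      (∀ k l, k ≠ l →
        Disjoint (interior (convexHull ℝ (Set.range (w k))))
          (interior (convexHull ℝ (Set.range (w l))))) →
      (⋃ k, convexHull ℝ (Set.range (w k)) = Set.Icc (0 : Fin n → ℝ) 1) →
      (∀ k, Metric.diam (convexHull ℝ (Set.range (w k))) < δ) →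
      |(∑ k : Fin K, f (w k 0) *
          Matrix.det (Matrix.of fun a i : Fin n => (w k i.succ - w k 0) a) /
          ((Nat.factorial n : ℕ) : ℝ)) -
        ∫ x in Set.Icc (0 : Fin n → ℝ) 1, f x| ≤ ε := by
  intro ε hε
  have hcomp : IsCompact (Set.Icc (0 : Fin n → ℝ) 1) := isCompact_Icc
  have huc : UniformContinuousOn f (Set.Icc 0 1) :=
    hcomp.uniformContinuousOn_of_continuous hf.continuousOn
  rw [Metric.uniformContinuousOn_iff] at huc
  obtain ⟨δ, hδ, hδ'⟩ := huc ε hε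
  refine ⟨δ, hδ, ?_⟩
  intro K w haff hdet hdisj hcov hdiam
  set Δ : Fin K → Set (Fin n → ℝ) := fun k => convexHull ℝ (Set.range (w k)) with hΔ
  set M : Fin K → Matrix (Fin n) (Fin n) ℝ :=
    fun k => Matrix.of fun a i : Fin n => (w k i.succ - w k 0) a with hM
  have hclosed : ∀ k, IsClosed (Δ k) :=
    fun k => ((Set.finite_range (w k)).isCompact_convexHull (𝕜 := ℝ)).isClosed
  have hconv : ∀ k, Convex ℝ (Δ k) := fun k => convex_convexHull ℝ _
  have hsubIcc : ∀ k, Δ k ⊆ Set.Icc 0 1 := fun k => hcov ▸ Set.subset_iUnion _ k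
  have hvol : ∀ k, volume (Δ k) = ENNReal.ofReal ((M k).det / n.factorial) :=
    fun k => RST.volume_simplex hn (w k) (hdet k)
  have hvolne : ∀ k, volume (Δ k) ≠ ⊤ := fun k => by
    rw [hvol k]; exact ENNReal.ofReal_ne_top
  -- a.e. disjointness
  have hae : Pairwise (Function.onFun (MeasureTheory.AEDisjoint volume) Δ) := by
    intro k l hkl
    have hsub : Δ k ∩ Δ l ⊆ frontier (Δ k) ∪ frontier (Δ l) := by
      rintro x ⟨hxk, hxl⟩
      by_cases hik : x ∈ interior (Δ k)
      · have hil : x ∉ interior (Δ l) := fun hil =>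
          Set.disjoint_left.1 (hdisj k l hkl) hik hil
        right
        rw [(hclosed l).frontier_eq]
        exact ⟨hxl, hil⟩
      · left
        rw [(hclosed k).frontier_eq]
        exact ⟨hxk, hik⟩
    refine measure_mono_null hsub ?_
    rw [measure_union_null_iff]
    exact ⟨(hconv k).addHaar_frontier volume, (hconv l).addHaar_frontier volume⟩
  -- total volume is 1
  have hvolsum : ∑ k : Fin K, volume (Δ k) = 1 := by
    have := measure_iUnion₀ hae (fun k => (hclosed k).measurableSet.nullMeasurableSet)
    rw [hcov, RST.volume_Icc_cube, tsum_fintype] at this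
    exact this.symm
  have hvolsumR : ∑ k : Fin K, (volume (Δ k)).toReal = 1 := by
    rw [← ENNReal.toReal_sum (fun k _ => hvolne k), hvolsum, ENNReal.toReal_one]
  -- splitting the integral
  have hint : IntegrableOn f (Set.Icc (0 : Fin n → ℝ) 1) :=
    hf.continuousOn.integrableOn_compact hcomp
  have hsplit : ∫ x in Set.Icc (0 : Fin n → ℝ) 1, f x = ∑ k : Fin K, ∫ x in Δ k, f x := by
    rw [← hcov, integral_iUnion_ae (fun k => (hclosed k).measurableSet.nullMeasurableSet) hae
      (by rw [hcov]; exact hint), tsum_fintype]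
  -- each Riemann term is an integral of a constant
  have hterm : ∀ k, f (w k 0) * (M k).det / (n.factorial : ℝ) = ∫ _ in Δ k, f (w k 0) := by
    intro k
    rw [setIntegral_const, measureReal_def, hvol k,
      ENNReal.toReal_ofReal (div_nonneg (hdet k).le (Nat.cast_nonneg _)), smul_eq_mul]
    ring
  -- rewrite the difference as a sum of integrals
  have hrw : (∑ k : Fin K, f (w k 0) * (M k).det / (n.factorial : ℝ)) -
      ∫ x in Set.Icc (0 : Fin n → ℝ) 1, f x
      = ∑ k : Fin K, ∫ x in Δ k, (f (w k 0) - f x) := by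
    rw [hsplit, ← Finset.sum_sub_distrib]
    refine Finset.sum_congr rfl fun k _ => ?_
    rw [hterm k, ← integral_sub (integrableOn_const (C := f (w k 0)) (hvolne k))
      (hint.mono_set (hsubIcc k))]
  rw [hrw]
  -- estimate
  have hbound : ∀ k, |∫ x in Δ k, (f (w k 0) - f x)| ≤ ε * (volume (Δ k)).toReal := by
    intro k
    have hv0 : w k 0 ∈ Δ k := subset_convexHull ℝ _ (Set.mem_range_self 0)
    have hb : ∀ x ∈ Δ k, ‖f (w k 0) - f x‖ ≤ ε := by
      intro x hx
      have hdist : dist (w k 0) x < δ := by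
        calc dist (w k 0) x ≤ Metric.diam (Δ k) :=
              Metric.dist_le_diam_of_mem
                ((Set.finite_range (w k)).isCompact_convexHull (𝕜 := ℝ)).isBounded hv0 hx
          _ < δ := hdiam k
      have := hδ' (w k 0) (hsubIcc k hv0) x (hsubIcc k hx) hdist
      rw [Real.dist_eq] at this
      rw [Real.norm_eq_abs]
      exact this.le
    have := norm_setIntegral_le_of_norm_le_const ((hvolne k).lt_top)
      hb
    rw [Real.norm_eq_abs] at this
    calc |∫ x in Δ k, (f (w k 0) - f x)| ≤ ε * (volume (Δ k)).toReal := this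
      _ = ε * (volume (Δ k)).toReal := rfl
  calc |∑ k : Fin K, ∫ x in Δ k, (f (w k 0) - f x)|
      ≤ ∑ k : Fin K, |∫ x in Δ k, (f (w k 0) - f x)| := Finset.abs_sum_le_sum_abs _ _
    _ ≤ ∑ k : Fin K, ε * (volume (Δ k)).toReal := Finset.sum_le_sum fun k _ => hbound k
    _ = ε * ∑ k : Fin K, (volume (Δ k)).toReal := by rw [Finset.mul_sum]
    _ = ε := by rw [hvolsumR, mul_one]
end
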